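/- arXiv:1912.03064 — 5 statements merged into one kernel-verified Lean document; each statement's English description precedes it below -/
import Mathlib

section
/- Let a = (a_1,…,a_m) and b = (b_1,…,b_m) be tuples of real numbers, let p = Σ_{i=1}^m a_i φ_i ∈ H and p' = Σ_{i=1}^m b_i φ'_i ∈ H'. Then (Σ_{i=1}^m (a_i − b_i)^2)^{1/2} ≤ (max_{1≤i≤m} ‖j φ_i − φ'_i‖) · Σ_{i=1}^m |a_i| + ‖j p − p'‖. (This is the paper's Lemma 3.2: the Euclidean distance between the spectral-coefficient vectors ψ' p' and ψ p is controlled by the defect α of j on the orthonormal family plus ‖j p − p'‖.) -/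
open RealInnerProductSpace

/-!
Put `q' = ∑ aᵢ φ'ᵢ`. Since `φ'` is orthonormal, `(∑ (aᵢ - bᵢ)²)^{1/2} = ‖q' - p'‖`, and by the
triangle inequality this is at most `‖j p - q'‖ + ‖j p - p'‖`. By linearity of `j`,
`j p - q' = ∑ aᵢ (j φᵢ - φ'ᵢ)`, whose norm is at most `maxᵢ ‖j φᵢ - φ'ᵢ‖ · ∑ |aᵢ|`.
-/

theorem Orthonormal.norm_sum_smul {ι E : Type*} [Fintype ι] [NormedAddCommGroup E]
    [InnerProductSpace ℝ E] {v : ι → E} (hv : Orthonormal ℝ v) (c : ι → ℝ) :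
    ‖∑ i, c i • v i‖ = √(∑ i, c i ^ 2) := by
  rw [← Real.sqrt_sq (norm_nonneg _), ← real_inner_self_eq_norm_sq, hv.inner_sum]
  simp only [conj_trivial, sq]

theorem norm_sum_smul_le_sup'_mul {ι 𝕜 E : Type*} [NormedField 𝕜] [SeminormedAddCommGroup E]
    [NormedSpace 𝕜 E] (s : Finset ι) (hs : s.Nonempty) (c : ι → 𝕜) (v : ι → E) :
    ‖∑ i ∈ s, c i • v i‖ ≤ s.sup' hs (fun i => ‖v i‖) * ∑ i ∈ s, ‖c i‖ :=
  calc ‖∑ i ∈ s, c i • v i‖ ≤ ∑ i ∈ s, ‖c i‖ * ‖v i‖ := norm_sum_le_of_le s fun i _ => norm_smul_le _ _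
    _ ≤ ∑ i ∈ s, ‖c i‖ * s.sup' hs (fun i => ‖v i‖) := by
      gcongr with i hi
      exact s.le_sup' (fun i => ‖v i‖) hi
    _ = s.sup' hs (fun i => ‖v i‖) * ∑ i ∈ s, ‖c i‖ := by rw [← Finset.sum_mul, mul_comm]

theorem stmt0_general {H H' : Type*} [NormedAddCommGroup H] [InnerProductSpace ℝ H]
    [NormedAddCommGroup H'] [InnerProductSpace ℝ H']
    {m : ℕ} (hm : 1 ≤ m)
    (φ : Fin m → H) (φ' : Fin m → H')
    (hφ' : Orthonormal ℝ φ')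
    (j : H →L[ℝ] H') (a b : Fin m → ℝ)
    (p : H) (hp : p = ∑ i, a i • φ i)
    (p' : H') (hp' : p' = ∑ i, b i • φ' i) :
    Real.sqrt (∑ i, (a i - b i) ^ 2) ≤
      (Finset.univ.sup' ⟨⟨0, hm⟩, Finset.mem_univ _⟩ (fun i => ‖j (φ i) - φ' i‖))
          * (∑ i, |a i|) + ‖j p - p'‖ := by
  set q' : H' := ∑ i, a i • φ' i
  have hcoeff : Real.sqrt (∑ i, (a i - b i) ^ 2) = ‖q' - p'‖ := by
    rw [← hφ'.norm_sum_smul, hp', ← Finset.sum_sub_distrib]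
    simp only [sub_smul]
  have hdefect : j p - q' = ∑ i, a i • (j (φ i) - φ' i) := by
    simp only [hp, map_sum, map_smul, smul_sub, Finset.sum_sub_distrib, q']
  calc Real.sqrt (∑ i, (a i - b i) ^ 2) = ‖(j p - p') - (j p - q')‖ := by
        rw [hcoeff, sub_sub_sub_cancel_left]
    _ ≤ ‖j p - p'‖ + ‖j p - q'‖ := norm_sub_le _ _
    _ ≤ ‖j p - p'‖ + (Finset.univ.sup' ⟨⟨0, hm⟩, Finset.mem_univ _⟩
          (fun i => ‖j (φ i) - φ' i‖)) * ∑ i, |a i| := by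
        rw [hdefect]
        simpa only [Real.norm_eq_abs] using
          add_le_add_right (norm_sum_smul_le_sup'_mul _ _ a _) _
    _ = _ := add_comm _ _

/-- Lemma 3.2 of the paper: the Euclidean distance between the spectral-coefficient
vectors is controlled by the defect of `j` on the orthonormal family plus `‖j p - p'‖`. -/
theorem stmt0 {H H' : Type*} [NormedAddCommGroup H] [InnerProductSpace ℝ H]
    [NormedAddCommGroup H'] [InnerProductSpace ℝ H']
    {m : ℕ} (hm : 1 ≤ m)
    (φ : Fin m → H) (φ' : Fin m → H')
    (hφ : Orthonormal ℝ φ) (hφ' : Orthonormal ℝ φ')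
    (j : H →L[ℝ] H') (a b : Fin m → ℝ)
    (p : H) (hp : p = ∑ i, a i • φ i)
    (p' : H') (hp' : p' = ∑ i, b i • φ' i) :
    Real.sqrt (∑ i, (a i - b i) ^ 2) ≤
      (Finset.univ.sup' ⟨⟨0, hm⟩, Finset.mem_univ _⟩ (fun i => ‖j (φ i) - φ' i‖))
          * (∑ i, |a i|) + ‖j p - p'‖ :=
  stmt0_general hm φ φ' hφ' j a b p hp p' hp'
end

section
/- Assume in addition that λ_i ≤ λ_m^0 + 1 for all i = 1,…,m, and that the time interval is J = [−T,0] (so the ODEs and the bounds β, C hold for all t ∈ [−T,0]). Then for every t ∈ [−T,0]: ‖p(t) − j p_0(t)‖ ≤ ( C(1+2T)γ + Cα + (Lβ + (L+1+√m)Cα + ρ)/(λ_m^0+1) ) · e^{−(2L+λ_m^0+1)t}. (This is the backward-in-time estimate of the paper's Lemma 3.3, with the constants produced by its variation-of-constants and Gronwall argument.) -/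
open RealInnerProductSpace intervalIntegral MeasureTheory Set

lemma myOrtho_norm_sq {E : Type*} [NormedAddCommGroup E] [InnerProductSpace ℝ E]
    {n : ℕ} {v : Fin n → E} (hv : Orthonormal ℝ v) (c : Fin n → ℝ) :
    ‖∑ i, c i • v i‖ ^ 2 = ∑ i, (c i) ^ 2 := by
  rw [← real_inner_self_eq_norm_sq]
  simpa [sq] using hv.inner_sum c c Finset.univ

lemma myOrtho_norm {E : Type*} [NormedAddCommGroup E] [InnerProductSpace ℝ E]
    {n : ℕ} {v : Fin n → E} (hv : Orthonormal ℝ v) (c : Fin n → ℝ) :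
    ‖∑ i, c i • v i‖ = Real.sqrt (∑ i, (c i) ^ 2) := by
  rw [← myOrtho_norm_sq hv c, Real.sqrt_sq (norm_nonneg _)]

lemma mySpan_repr {E : Type*} [NormedAddCommGroup E] [InnerProductSpace ℝ E]
    {n : ℕ} {v : Fin n → E} (hv : Orthonormal ℝ v) {x : E}
    (hx : x ∈ Submodule.span ℝ (Set.range v)) :
    x = ∑ i, ⟪x, v i⟫ • v i := by
  induction hx using Submodule.span_induction with
  | mem y hy =>
      obtain ⟨j, rfl⟩ := hy
      have h := orthonormal_iff_ite.mp hv
      simp [h, Finset.sum_ite_eq']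
  | zero => simp
  | add y z hy hz hy' hz' =>
      calc y + z = (∑ i, ⟪y, v i⟫ • v i) + ∑ i, ⟪z, v i⟫ • v i := by rw [← hy', ← hz']
      _ = ∑ i, ⟪y + z, v i⟫ • v i := by
          rw [← Finset.sum_add_distrib]
          congr 1; ext i; rw [inner_add_left, add_smul]
  | smul a y hy hy' =>
      calc a • y = a • ∑ i, ⟪y, v i⟫ • v i := by rw [← hy']
      _ = ∑ i, ⟪a • y, v i⟫ • v i := by
          rw [Finset.smul_sum]
          congr 1; ext i; rw [real_inner_smul_left, smul_smul]

lemma myVOC {a fc : ℝ → ℝ} {lam t : ℝ} (ht : t ≤ 0)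
    (hd : ∀ u ∈ Set.Icc t 0, HasDerivAt a (-lam * a u + fc u) u)
    (hint : IntervalIntegrable (fun u => Real.exp (lam * u) * fc u) volume t 0) :
    a t = Real.exp (-lam * t) * a 0
      - Real.exp (-lam * t) * ∫ u in t..0, Real.exp (lam * u) * fc u := by
  have huIcc : Set.uIcc t 0 = Set.Icc t 0 := Set.uIcc_of_le ht
  have key : ∫ u in t..0, Real.exp (lam * u) * fc u
      = (fun u => Real.exp (lam * u) * a u) 0 - (fun u => Real.exp (lam * u) * a u) t := by
    apply integral_eq_sub_of_hasDerivAt (f := fun u => Real.exp (lam * u) * a u)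
      (f' := fun u => Real.exp (lam * u) * fc u)
    · intro u hu
      rw [huIcc] at hu
      have h1 : HasDerivAt (fun u => Real.exp (lam * u)) (lam * Real.exp (lam * u)) u := by
        have := ((hasDerivAt_id' u).const_mul lam).exp
        simpa [mul_comm] using this
      have := h1.mul (hd u hu)
      refine this.congr_deriv (Eq.symm ?_)
      ring
    · exact hint
  simp only [mul_zero, Real.exp_zero, one_mul] at key
  have : Real.exp (lam * t) * a t = a 0 - ∫ u in t..0, Real.exp (lam * u) * fc u := by
    rw [key]; ring
  have h2 := congrArg (fun x => Real.exp (-lam * t) * x) this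
  rw [← mul_assoc, ← Real.exp_add] at h2
  simp only [neg_mul, neg_add_cancel, Real.exp_zero, one_mul] at h2
  rw [neg_mul, h2, mul_sub]

lemma myGronwall {G : ℝ → ℝ} {T K c : ℝ} (hK : 0 < K)
    (hGc : Continuous G)
    (hG0 : ∀ τ ∈ Set.Icc (0:ℝ) T, 0 ≤ G τ)
    (hineq : ∀ τ ∈ Set.Icc (0:ℝ) T, G τ ≤ c + K * ∫ σ in (0:ℝ)..τ, G σ) :
    ∀ τ ∈ Set.Icc (0:ℝ) T, G τ ≤ c * Real.exp (K * τ) := by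
  intro τ hτ
  set Ψ : ℝ → ℝ := fun x => ∫ σ in (0:ℝ)..x, G σ with hΨdef
  have hΨd : ∀ x : ℝ, HasDerivAt Ψ (G x) x := fun x =>
    intervalIntegral.integral_hasDerivAt_right (hGc.intervalIntegrable _ _)
      (hGc.stronglyMeasurableAtFilter _ _) hGc.continuousAt
  have hΨ0 : ∀ x ∈ Set.Icc (0:ℝ) T, 0 ≤ Ψ x := by
    intro x hx
    apply intervalIntegral.integral_nonneg hx.1
    intro u hu; exact hG0 u ⟨hu.1, hu.2.trans hx.2⟩
  have hg : ∀ x ∈ Set.Icc (0:ℝ) T, ‖Ψ x‖ ≤ gronwallBound 0 K c (x - 0) := by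
    apply norm_le_gronwallBound_of_norm_deriv_right_le (f := Ψ) (f' := G)
    · exact (continuous_iff_continuousAt.2 fun x => (hΨd x).continuousAt).continuousOn
    · intro x hx; exact (hΨd x).hasDerivWithinAt
    · simp [hΨdef]
    · intro x hx
      have hx' : x ∈ Set.Icc (0:ℝ) T := ⟨hx.1, le_of_lt hx.2⟩
      rw [Real.norm_eq_abs, abs_of_nonneg (hG0 x hx'), Real.norm_eq_abs,
        abs_of_nonneg (hΨ0 x hx')]
      have := hineq x hx'
      linarith [this]
  have hb := hg τ hτ
  rw [Real.norm_eq_abs, abs_of_nonneg (hΨ0 τ hτ), sub_zero,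
    gronwallBound_of_K_ne_0 (ne_of_gt hK)] at hb
  have h3 : c + K * Ψ τ ≤ c * Real.exp (K * τ) := by
    have : K * Ψ τ ≤ K * (0 * Real.exp (K * τ) + c / K * (Real.exp (K * τ) - 1)) :=
      mul_le_mul_of_nonneg_left hb (le_of_lt hK)
    rw [zero_mul, zero_add, ← mul_assoc, mul_div_cancel₀ _ (ne_of_gt hK)] at this
    nlinarith [this]
  exact le_trans (hineq τ hτ) h3

set_option maxHeartbeats 2000000 in
/-- The backward-in-time estimate of Lemma 3.3 of the paper, on the interval `[-T,0]`,
with the constants produced by its variation-of-constants and Gronwall argument.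
Here `lam0m` is `λ_m^0`, the largest of the eigenvalues `λ_1^0 ≤ ⋯ ≤ λ_m^0`. -/
theorem stmt1
    {H0 H : Type*} [NormedAddCommGroup H0] [InnerProductSpace ℝ H0] [CompleteSpace H0]
    [NormedAddCommGroup H] [InnerProductSpace ℝ H] [CompleteSpace H]
    {m : ℕ} (hm : 1 ≤ m)
    (φ0 : Fin m → H0) (φ : Fin m → H)
    (hφ0 : Orthonormal ℝ φ0) (hφ : Orthonormal ℝ φ)
    (lam0 lam : Fin m → ℝ)
    (hlam0pos : ∀ i, 0 < lam0 i) (hlam0mono : Monotone lam0)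
    (hlampos : ∀ i, 0 < lam i)
    (lam0m : ℝ) (hlam0m : lam0m = lam0 ⟨m - 1, Nat.sub_lt hm one_pos⟩)
    (j : H0 →L[ℝ] H) (hj : ‖j‖ ≤ 2)
    (F0 : H0 → H0) (F : H → H) (L : ℝ) (hL : 0 < L)
    (hFlip : LipschitzWith L.toNNReal F)
    (Φ0 : EuclideanSpace ℝ (Fin m) → H0) (Φ : EuclideanSpace ℝ (Fin m) → H)
    (hΦlip : LipschitzWith 1 Φ)
    (T : ℝ) (hT : 0 < T)
    (p0 : ℝ → H0) (p : ℝ → H)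
    (hp0span : ∀ t, p0 t ∈ Submodule.span ℝ (Set.range φ0))
    (hpspan : ∀ t, p t ∈ Submodule.span ℝ (Set.range φ))
    (hode0 : ∀ t ∈ Set.Icc (-T) (0:ℝ), HasDerivAt p0
      (-(∑ i, (lam0 i * ⟪p0 t, φ0 i⟫) • φ0 i)
        + ∑ i, ⟪F0 (p0 t + Φ0 (WithLp.toLp 2 (fun i => ⟪p0 t, φ0 i⟫))), φ0 i⟫ • φ0 i) t)
    (hode : ∀ t ∈ Set.Icc (-T) (0:ℝ), HasDerivAt p
      (-(∑ i, (lam i * ⟪p t, φ i⟫) • φ i)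
        + ∑ i, ⟪F (p t + Φ (WithLp.toLp 2 (fun i => ⟪p t, φ i⟫))), φ i⟫ • φ i) t)
    (hinit : ∀ i, ⟪p 0, φ i⟫ = ⟪p0 0, φ0 i⟫)
    (α γ ρ β C : ℝ)
    (hα : 0 ≤ α) (hγ : 0 ≤ γ) (hρ : 0 ≤ ρ) (hβ : 0 ≤ β) (hC : 0 ≤ C)
    (hjφ : ∀ i, ‖j (φ0 i) - φ i‖ ≤ α)
    (hjadj : ∀ i, ‖ContinuousLinearMap.adjoint j (φ i) - φ0 i‖ ≤ α)
    (hγbound : ∀ i, ∀ t ∈ Set.Icc (-T) T,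
      |Real.exp (-(lam i) * t) - Real.exp (-(lam0 i) * t)| ≤ γ)
    (hρbound : ∀ u : H0, ‖F (j u) - j (F0 u)‖ ≤ ρ)
    (hlamle : ∀ i, lam i ≤ lam0m + 1)
    (hβbound : ∀ t ∈ Set.Icc (-T) (0:ℝ),
      ‖Φ (WithLp.toLp 2 (fun i => ⟪p0 t, φ0 i⟫)) - j (Φ0 (WithLp.toLp 2 (fun i => ⟪p0 t, φ0 i⟫)))‖ ≤ β)
    (hC1 : ∀ t ∈ Set.Icc (-T) (0:ℝ), ∑ i, |⟪p0 t, φ0 i⟫| ≤ C)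
    (hC2 : ∀ t ∈ Set.Icc (-T) (0:ℝ),
      ∑ i, |⟪F0 (p0 t + Φ0 (WithLp.toLp 2 (fun i => ⟪p0 t, φ0 i⟫))), φ0 i⟫| ≤ C)
    (hC3 : ∀ t ∈ Set.Icc (-T) (0:ℝ),
      ‖F0 (p0 t + Φ0 (WithLp.toLp 2 (fun i => ⟪p0 t, φ0 i⟫)))‖ ≤ C) :
    ∀ t ∈ Set.Icc (-T) (0:ℝ),
      ‖p t - j (p0 t)‖ ≤
        (C * (1 + 2 * T) * γ + C * α
            + (L * β + (L + 1 + Real.sqrt m) * C * α + ρ) / (lam0m + 1))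
          * Real.exp (-(2 * L + lam0m + 1) * t) := by
  have hT0 : (-T:ℝ) ≤ 0 := by linarith
  have h0mem : (0:ℝ) ∈ Set.Icc (-T) (0:ℝ) := ⟨hT0, le_refl 0⟩
  have hlam0m_pos : 0 < lam0m := hlam0m ▸ hlam0pos _
  set mu : ℝ := lam0m + 1 with hmu_def
  have hmupos : 0 < mu := by simp only [hmu_def]; linarith
  set B' : ℝ := L*C*α + L*β + ρ + Real.sqrt m * C * α with hB'_def
  set A' : ℝ := C*γ + C*γ*T + C*α with hA'_def
  have hCα : 0 ≤ C * α := mul_nonneg hC hα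
  have hB'0 : 0 ≤ B' := by
    have := Real.sqrt_nonneg (m:ℝ)
    simp only [hB'_def]
    positivity
  have hA'0 : 0 ≤ A' := by simp only [hA'_def]; positivity
  -- continuity
  have hpc : ContinuousOn p (Set.Icc (-T) 0) :=
    fun s hs => ((hode s hs).continuousAt).continuousWithinAt
  have hp0c : ContinuousOn p0 (Set.Icc (-T) 0) :=
    fun s hs => ((hode0 s hs).continuousAt).continuousWithinAt
  have hgc : ContinuousOn (fun s => ‖p s - j (p0 s)‖) (Set.Icc (-T) 0) :=
    (hpc.sub (j.continuous.comp_continuousOn hp0c)).norm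
  -- scalar derivatives
  have hda : ∀ (i : Fin m), ∀ s ∈ Set.Icc (-T) (0:ℝ),
      HasDerivAt (fun u => ⟪p u, φ i⟫)
        (-(lam i) * ⟪p s, φ i⟫ + ⟪F (p s + Φ (WithLp.toLp 2 (fun k => ⟪p s, φ k⟫))), φ i⟫) s := by
    intro i s hs
    have h1 := (innerSL ℝ (φ i)).hasFDerivAt.comp_hasDerivAt s (hode s hs)
    have h2 : (fun u => (innerSL ℝ (φ i)) (p u)) = fun u => ⟪p u, φ i⟫ :=
      funext fun u => real_inner_comm _ _
    simp only [Function.comp_def] at h1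
    rw [h2] at h1
    refine h1.congr_deriv (Eq.symm ?_)
    have hite := orthonormal_iff_ite.mp hφ
    simp only [ContinuousLinearMap.map_add, ContinuousLinearMap.map_neg, map_sum,
      ContinuousLinearMap.map_smul, innerSL_apply_apply, smul_eq_mul, hite, mul_ite, mul_one, mul_zero,
      Finset.sum_ite_eq, Finset.sum_ite_eq', Finset.mem_univ, if_true]
    rw [real_inner_comm, neg_mul]
  have hda0 : ∀ (i : Fin m), ∀ s ∈ Set.Icc (-T) (0:ℝ),
      HasDerivAt (fun u => ⟪p0 u, φ0 i⟫)
        (-(lam0 i) * ⟪p0 s, φ0 i⟫ + ⟪F0 (p0 s + Φ0 (WithLp.toLp 2 (fun k => ⟪p0 s, φ0 k⟫))), φ0 i⟫) s := by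
    intro i s hs
    have h1 := (innerSL ℝ (φ0 i)).hasFDerivAt.comp_hasDerivAt s (hode0 s hs)
    have h2 : (fun u => (innerSL ℝ (φ0 i)) (p0 u)) = fun u => ⟪p0 u, φ0 i⟫ :=
      funext fun u => real_inner_comm _ _
    simp only [Function.comp_def] at h1
    rw [h2] at h1
    refine h1.congr_deriv (Eq.symm ?_)
    have hite := orthonormal_iff_ite.mp hφ0
    simp only [ContinuousLinearMap.map_add, ContinuousLinearMap.map_neg, map_sum,
      ContinuousLinearMap.map_smul, innerSL_apply_apply, smul_eq_mul, hite, mul_ite, mul_one, mul_zero,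
      Finset.sum_ite_eq, Finset.sum_ite_eq', Finset.mem_univ, if_true]
    rw [real_inner_comm, neg_mul]
  -- continuity of the nonlinearity coefficients for p
  have hffc : ∀ (i : Fin m), ContinuousOn
      (fun s => ⟪F (p s + Φ (WithLp.toLp 2 (fun k => ⟪p s, φ k⟫))), φ i⟫) (Set.Icc (-T) 0) := by
    intro i
    have hψc : ContinuousOn (fun s => (WithLp.toLp 2 (fun k => ⟪p s, φ k⟫) : EuclideanSpace ℝ (Fin m)))
        (Set.Icc (-T) 0) := by
      exact (PiLp.continuous_toLp 2 _).comp_continuousOn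
        (continuousOn_pi.2 fun k => hpc.inner continuousOn_const)
    have hFc : ContinuousOn (fun s => F (p s + Φ (WithLp.toLp 2 (fun k => ⟪p s, φ k⟫)))) (Set.Icc (-T) 0) :=
      hFlip.continuous.comp_continuousOn
        (hpc.add (hΦlip.continuous.comp_continuousOn hψc))
    exact hFc.inner continuousOn_const
  -- bound on f0 coefficients
  have hf0b : ∀ s ∈ Set.Icc (-T) (0:ℝ), ∀ (i : Fin m),
      |⟪F0 (p0 s + Φ0 (WithLp.toLp 2 (fun k => ⟪p0 s, φ0 k⟫))), φ0 i⟫| ≤ C := by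
    intro s hs i
    calc |⟪F0 (p0 s + Φ0 (WithLp.toLp 2 (fun k => ⟪p0 s, φ0 k⟫))), φ0 i⟫|
        ≤ ∑ k, |⟪F0 (p0 s + Φ0 (WithLp.toLp 2 (fun k => ⟪p0 s, φ0 k⟫))), φ0 k⟫| :=
          Finset.single_le_sum (f := fun k => |⟪F0 (p0 s + Φ0 (WithLp.toLp 2 (fun k => ⟪p0 s, φ0 k⟫))), φ0 k⟫|)
            (fun k _ => abs_nonneg _) (Finset.mem_univ i)
      _ ≤ C := hC2 s hs
  -- a.e.-measurability of f0 coefficients on subintervals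
  have hf0meas : ∀ (i : Fin m), ∀ t ∈ Set.Icc (-T) (0:ℝ),
      AEStronglyMeasurable (fun s => ⟪F0 (p0 s + Φ0 (WithLp.toLp 2 (fun k => ⟪p0 s, φ0 k⟫))), φ0 i⟫)
        (volume.restrict (Set.Ioc t 0)) := by
    intro i t ht
    have hsub : Set.Ioc t (0:ℝ) ⊆ Set.Icc (-T) 0 :=
      fun s hs => ⟨le_trans ht.1 (le_of_lt hs.1), hs.2⟩
    have ha0c : ContinuousOn (fun s => ⟪p0 s, φ0 i⟫) (Set.Ioc t (0:ℝ)) :=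
      (hp0c.inner continuousOn_const).mono hsub
    have h1 : AEStronglyMeasurable (fun s => deriv (fun u => ⟪p0 u, φ0 i⟫) s
          + lam0 i * ⟪p0 s, φ0 i⟫) (volume.restrict (Set.Ioc t 0)) := by
      apply AEStronglyMeasurable.add
      · exact (measurable_deriv (fun u => ⟪p0 u, φ0 i⟫)).aestronglyMeasurable.restrict
      · exact (ha0c.aestronglyMeasurable measurableSet_Ioc).const_mul _
    apply h1.congr
    rw [Filter.EventuallyEq, ae_restrict_iff' measurableSet_Ioc]
    apply Filter.Eventually.of_forall
    intro s hs
    have hd := (hda0 i s (hsub hs)).deriv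
    rw [hd]; ring
  -- interval integrability of  e * f0  and  e * |f0|
  have hf0int : ∀ (i : Fin m) (e : ℝ → ℝ), Continuous e → ∀ t ∈ Set.Icc (-T) (0:ℝ),
      IntervalIntegrable (fun s => e s * ⟪F0 (p0 s + Φ0 (WithLp.toLp 2 (fun k => ⟪p0 s, φ0 k⟫))), φ0 i⟫)
        volume t 0 := by
    intro i e he t ht
    obtain ⟨M, hM⟩ := (isCompact_Icc (a := t) (b := (0:ℝ))).exists_bound_of_continuousOn
      he.continuousOn
    have hM0 : 0 ≤ M := le_trans (norm_nonneg _) (hM 0 ⟨ht.2, le_refl 0⟩)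
    rw [intervalIntegrable_iff_integrableOn_Ioc_of_le ht.2]
    refine ⟨(he.aestronglyMeasurable.restrict).mul (hf0meas i t ht), ?_⟩
    apply HasFiniteIntegral.restrict_of_bounded (C := M * C) measure_Ioc_lt_top
    rw [ae_restrict_iff' measurableSet_Ioc]
    apply Filter.Eventually.of_forall
    intro s hs
    have hsub : s ∈ Set.Icc (-T) (0:ℝ) := ⟨le_trans ht.1 (le_of_lt hs.1), hs.2⟩
    rw [Real.norm_eq_abs, abs_mul]
    exact mul_le_mul ((Real.norm_eq_abs (e s)) ▸ hM s ⟨le_of_lt hs.1, hs.2⟩)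
      (hf0b s hsub i) (abs_nonneg _) hM0
  have hf0intabs : ∀ (i : Fin m) (e : ℝ → ℝ), Continuous e → ∀ t ∈ Set.Icc (-T) (0:ℝ),
      IntervalIntegrable (fun s => e s * |⟪F0 (p0 s + Φ0 (WithLp.toLp 2 (fun k => ⟪p0 s, φ0 k⟫))), φ0 i⟫|)
        volume t 0 := by
    intro i e he t ht
    obtain ⟨M, hM⟩ := (isCompact_Icc (a := t) (b := (0:ℝ))).exists_bound_of_continuousOn
      he.continuousOn
    have hM0 : 0 ≤ M := le_trans (norm_nonneg _) (hM 0 ⟨ht.2, le_refl 0⟩)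
    rw [intervalIntegrable_iff_integrableOn_Ioc_of_le ht.2]
    refine ⟨(he.aestronglyMeasurable.restrict).mul ?_, ?_⟩
    · have := (hf0meas i t ht).norm
      simpa [Real.norm_eq_abs] using this
    apply HasFiniteIntegral.restrict_of_bounded (C := M * C) measure_Ioc_lt_top
    rw [ae_restrict_iff' measurableSet_Ioc]
    apply Filter.Eventually.of_forall
    intro s hs
    have hsub : s ∈ Set.Icc (-T) (0:ℝ) := ⟨le_trans ht.1 (le_of_lt hs.1), hs.2⟩
    rw [Real.norm_eq_abs, abs_mul, abs_abs]
    exact mul_le_mul ((Real.norm_eq_abs (e s)) ▸ hM s ⟨le_of_lt hs.1, hs.2⟩)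
      (hf0b s hsub i) (abs_nonneg _) hM0
  have hffint : ∀ (i : Fin m) (e : ℝ → ℝ), Continuous e → ∀ t ∈ Set.Icc (-T) (0:ℝ),
      IntervalIntegrable (fun s => e s * ⟪F (p s + Φ (WithLp.toLp 2 (fun k => ⟪p s, φ k⟫))), φ i⟫)
        volume t 0 := by
    intro i e he t ht
    apply ContinuousOn.intervalIntegrable
    rw [Set.uIcc_of_le ht.2]
    exact (he.continuousOn.mul ((hffc i).mono (Set.Icc_subset_Icc_left ht.1)))
  -- norm identity for D
  have hDnorm : ∀ s : ℝ, ‖∑ i, (⟪p s, φ i⟫ - ⟪p0 s, φ0 i⟫) • φ i‖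
      = Real.sqrt (∑ i, (⟪p s, φ i⟫ - ⟪p0 s, φ0 i⟫) ^ 2) :=
    fun s => myOrtho_norm hφ _
  -- relation between g and D
  have hjrem : ∀ s ∈ Set.Icc (-T) (0:ℝ),
      ‖∑ i, ⟪p0 s, φ0 i⟫ • (j (φ0 i) - φ i)‖ ≤ C * α := by
    intro s hs
    calc ‖∑ i, ⟪p0 s, φ0 i⟫ • (j (φ0 i) - φ i)‖
        ≤ ∑ i, ‖⟪p0 s, φ0 i⟫ • (j (φ0 i) - φ i)‖ := norm_sum_le _ _
      _ ≤ ∑ i, |⟪p0 s, φ0 i⟫| * α := by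
          apply Finset.sum_le_sum
          intro i _
          rw [norm_smul, Real.norm_eq_abs]
          exact mul_le_mul_of_nonneg_left (hjφ i) (abs_nonneg _)
      _ = (∑ i, |⟪p0 s, φ0 i⟫|) * α := by rw [Finset.sum_mul]
      _ ≤ C * α := mul_le_mul_of_nonneg_right (hC1 s hs) hα
  have hDdecomp : ∀ s : ℝ, ∑ i, (⟪p s, φ i⟫ - ⟪p0 s, φ0 i⟫) • φ i
      = (p s - j (p0 s)) + ∑ i, ⟪p0 s, φ0 i⟫ • (j (φ0 i) - φ i) := by
    intro s
    have hp := mySpan_repr hφ (hpspan s)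
    have hp0 := mySpan_repr hφ0 (hp0span s)
    have hjp0 : j (p0 s) = ∑ i, ⟪p0 s, φ0 i⟫ • j (φ0 i) := by
      calc j (p0 s) = j (∑ i, ⟪p0 s, φ0 i⟫ • φ0 i) := by rw [← hp0]
        _ = ∑ i, ⟪p0 s, φ0 i⟫ • j (φ0 i) := by
            rw [map_sum]; congr 1; ext i; rw [j.map_smul]
    simp only [sub_smul, smul_sub, Finset.sum_sub_distrib]
    rw [← hp, hjp0]
    abel
  have hDrel : ∀ s ∈ Set.Icc (-T) (0:ℝ),
      ‖∑ i, (⟪p s, φ i⟫ - ⟪p0 s, φ0 i⟫) • φ i‖ ≤ ‖p s - j (p0 s)‖ + C * α := by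
    intro s hs
    rw [hDdecomp s]
    exact le_trans (norm_add_le _ _) (by gcongr; exact hjrem s hs)
  have hgD : ∀ s ∈ Set.Icc (-T) (0:ℝ),
      ‖p s - j (p0 s)‖ ≤ ‖∑ i, (⟪p s, φ i⟫ - ⟪p0 s, φ0 i⟫) • φ i‖ + C * α := by
    intro s hs
    have : p s - j (p0 s) = (∑ i, (⟪p s, φ i⟫ - ⟪p0 s, φ0 i⟫) • φ i)
        - ∑ i, ⟪p0 s, φ0 i⟫ • (j (φ0 i) - φ i) := by
      rw [hDdecomp s]; abel
    rw [this]
    exact le_trans (norm_sub_le _ _) (by gcongr; exact hjrem s hs)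
  -- the w bound
  have hw : ∀ s ∈ Set.Icc (-T) (0:ℝ),
      ‖F (p s + Φ (WithLp.toLp 2 (fun k => ⟪p s, φ k⟫))) - j (F0 (p0 s + Φ0 (WithLp.toLp 2 (fun k => ⟪p0 s, φ0 k⟫))))‖
        ≤ 2*L*‖p s - j (p0 s)‖ + (L*C*α + L*β + ρ) := by
    intro s hs
    have hLc : (L.toNNReal : ℝ) = L := Real.coe_toNNReal L hL.le
    set ψ1 : EuclideanSpace ℝ (Fin m) := WithLp.toLp 2 (fun k => ⟪p s, φ k⟫) with hψ1
    set ψ2 : EuclideanSpace ℝ (Fin m) := WithLp.toLp 2 (fun k => ⟪p0 s, φ0 k⟫) with hψ2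
    have hD : ‖ψ1 - ψ2‖ = ‖∑ i, (⟪p s, φ i⟫ - ⟪p0 s, φ0 i⟫) • φ i‖ := by
      rw [hDnorm s, EuclideanSpace.norm_eq]
      congr 1
      apply Finset.sum_congr rfl
      intro i _
      rw [Real.norm_eq_abs, sq_abs]
      simp [hψ1, hψ2, PiLp.sub_apply]
    have hΦd : ‖Φ ψ1 - Φ ψ2‖ ≤ ‖p s - j (p0 s)‖ + C * α := by
      have h1 := hΦlip.dist_le_mul ψ1 ψ2
      rw [dist_eq_norm, dist_eq_norm] at h1
      simp only [NNReal.coe_one, one_mul] at h1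
      calc ‖Φ ψ1 - Φ ψ2‖ ≤ ‖ψ1 - ψ2‖ := h1
        _ = ‖∑ i, (⟪p s, φ i⟫ - ⟪p0 s, φ0 i⟫) • φ i‖ := hD
        _ ≤ ‖p s - j (p0 s)‖ + C * α := hDrel s hs
    have key1 : ‖F (p s + Φ ψ1) - F (j (p0 s + Φ0 ψ2))‖
        ≤ L * (2*‖p s - j (p0 s)‖ + C*α + β) := by
      have h1 := hFlip.dist_le_mul (p s + Φ ψ1) (j (p0 s + Φ0 ψ2))
      rw [dist_eq_norm, dist_eq_norm, hLc] at h1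
      refine le_trans h1 (mul_le_mul_of_nonneg_left ?_ hL.le)
      have hdec : (p s + Φ ψ1) - j (p0 s + Φ0 ψ2)
          = (p s - j (p0 s)) + (Φ ψ1 - Φ ψ2) + (Φ ψ2 - j (Φ0 ψ2)) := by
        rw [map_add]; abel
      rw [hdec]
      refine le_trans (norm_add₃_le) ?_
      have hβ' := hβbound s hs
      rw [← hψ2] at hβ'
      linarith [hΦd]
    have key2 : ‖F (j (p0 s + Φ0 ψ2)) - j (F0 (p0 s + Φ0 ψ2))‖ ≤ ρ := hρbound _
    have hdec2 : F (p s + Φ ψ1) - j (F0 (p0 s + Φ0 ψ2))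
        = (F (p s + Φ ψ1) - F (j (p0 s + Φ0 ψ2)))
          + (F (j (p0 s + Φ0 ψ2)) - j (F0 (p0 s + Φ0 ψ2))) := by abel
    rw [hdec2]
    refine le_trans (norm_add_le _ _) ?_
    have := norm_nonneg (p s - j (p0 s))
    nlinarith [key1, key2]
  -- pointwise bound for the middle integrand
  have hmid : ∀ t ∈ Set.Icc (-T) (0:ℝ), ∀ s ∈ Set.Icc t (0:ℝ),
      ‖∑ i, (Real.exp (lam i * (s - t)) *
          (⟪F (p s + Φ (WithLp.toLp 2 (fun k => ⟪p s, φ k⟫))), φ i⟫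
            - ⟪F0 (p0 s + Φ0 (WithLp.toLp 2 (fun k => ⟪p0 s, φ0 k⟫))), φ0 i⟫)) • φ i‖
        ≤ Real.exp (mu*(s-t)) * (2*L*‖p s - j (p0 s)‖ + B') := by
    intro t ht s hs
    have hsIcc : s ∈ Set.Icc (-T) (0:ℝ) := ⟨le_trans ht.1 hs.1, hs.2⟩
    have hst : 0 ≤ s - t := by linarith [hs.1]
    set w : H := F (p s + Φ (WithLp.toLp 2 (fun k => ⟪p s, φ k⟫)))
      - j (F0 (p0 s + Φ0 (WithLp.toLp 2 (fun k => ⟪p0 s, φ0 k⟫)))) with hw_def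
    set c : Fin m → ℝ := fun i => ⟪F (p s + Φ (WithLp.toLp 2 (fun k => ⟪p s, φ k⟫))), φ i⟫
      - ⟪F0 (p0 s + Φ0 (WithLp.toLp 2 (fun k => ⟪p0 s, φ0 k⟫))), φ0 i⟫ with hc_def
    have h1 : ‖∑ i, (Real.exp (lam i * (s - t)) * c i) • φ i‖
        ≤ Real.exp (mu*(s-t)) * ‖∑ i, c i • φ i‖ := by
      rw [myOrtho_norm hφ, myOrtho_norm hφ,
        ← Real.sqrt_sq (le_of_lt (Real.exp_pos (mu*(s-t)))), ← Real.sqrt_mul (sq_nonneg _)]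
      apply Real.sqrt_le_sqrt
      rw [Finset.mul_sum]
      apply Finset.sum_le_sum
      intro i _
      rw [mul_pow]
      have hle : Real.exp (lam i*(s-t)) ^ 2 ≤ Real.exp (mu*(s-t)) ^ 2 :=
        pow_le_pow_left₀ (le_of_lt (Real.exp_pos _))
          (Real.exp_le_exp.2 (mul_le_mul_of_nonneg_right (hlamle i) hst)) 2
      exact mul_le_mul_of_nonneg_right hle (sq_nonneg _)
    have hcw : ∀ i, c i = ⟪w, φ i⟫
        + ⟪F0 (p0 s + Φ0 (WithLp.toLp 2 (fun k => ⟪p0 s, φ0 k⟫))),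
            ContinuousLinearMap.adjoint j (φ i) - φ0 i⟫ := by
      intro i
      have e1 : ⟪w, φ i⟫ = ⟪F (p s + Φ (WithLp.toLp 2 (fun k => ⟪p s, φ k⟫))), φ i⟫
          - ⟪j (F0 (p0 s + Φ0 (WithLp.toLp 2 (fun k => ⟪p0 s, φ0 k⟫)))), φ i⟫ := by
        rw [hw_def, inner_sub_left]
      have e2 : ⟪j (F0 (p0 s + Φ0 (WithLp.toLp 2 (fun k => ⟪p0 s, φ0 k⟫)))), φ i⟫
          = ⟪F0 (p0 s + Φ0 (WithLp.toLp 2 (fun k => ⟪p0 s, φ0 k⟫))), ContinuousLinearMap.adjoint j (φ i)⟫ := by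
        rw [real_inner_comm, ← ContinuousLinearMap.adjoint_inner_left, real_inner_comm]
      rw [hc_def]
      simp only []
      rw [e1, e2, inner_sub_right]
      ring
    have hsplit : ∑ i, c i • φ i = (∑ i, ⟪w, φ i⟫ • φ i)
        + ∑ i, ⟪F0 (p0 s + Φ0 (WithLp.toLp 2 (fun k => ⟪p0 s, φ0 k⟫))),
            ContinuousLinearMap.adjoint j (φ i) - φ0 i⟫ • φ i := by
      rw [← Finset.sum_add_distrib]
      apply Finset.sum_congr rfl
      intro i _
      rw [← add_smul, ← hcw i]
    have hbessel : ‖∑ i, ⟪w, φ i⟫ • φ i‖ ≤ ‖w‖ := by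
      rw [myOrtho_norm hφ, ← Real.sqrt_sq (norm_nonneg w)]
      apply Real.sqrt_le_sqrt
      have hb := hφ.sum_inner_products_le (s := Finset.univ) w
      convert hb using 2 with i
      rw [Real.norm_eq_abs, sq_abs, real_inner_comm]
    have hy : ‖∑ i, ⟪F0 (p0 s + Φ0 (WithLp.toLp 2 (fun k => ⟪p0 s, φ0 k⟫))),
        ContinuousLinearMap.adjoint j (φ i) - φ0 i⟫ • φ i‖ ≤ Real.sqrt m * (C * α) := by
      rw [myOrtho_norm hφ]
      have hterm : ∀ i : Fin m, (⟪F0 (p0 s + Φ0 (WithLp.toLp 2 (fun k => ⟪p0 s, φ0 k⟫))),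
          ContinuousLinearMap.adjoint j (φ i) - φ0 i⟫ : ℝ) ^ 2 ≤ (C*α) ^ 2 := by
        intro i
        have hy1 : |(⟪F0 (p0 s + Φ0 (WithLp.toLp 2 (fun k => ⟪p0 s, φ0 k⟫))),
            ContinuousLinearMap.adjoint j (φ i) - φ0 i⟫ : ℝ)| ≤ C * α := by
          refine le_trans (abs_real_inner_le_norm _ _) ?_
          exact mul_le_mul (hC3 s hsIcc) (hjadj i) (norm_nonneg _) hC
        calc (⟪F0 (p0 s + Φ0 (WithLp.toLp 2 (fun k => ⟪p0 s, φ0 k⟫))),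
              ContinuousLinearMap.adjoint j (φ i) - φ0 i⟫ : ℝ) ^ 2
            = |(⟪F0 (p0 s + Φ0 (WithLp.toLp 2 (fun k => ⟪p0 s, φ0 k⟫))),
              ContinuousLinearMap.adjoint j (φ i) - φ0 i⟫ : ℝ)| ^ 2 := (sq_abs _).symm
          _ ≤ (C*α) ^ 2 := pow_le_pow_left₀ (abs_nonneg _) hy1 2
      calc Real.sqrt (∑ i, (⟪F0 (p0 s + Φ0 (WithLp.toLp 2 (fun k => ⟪p0 s, φ0 k⟫))),
            ContinuousLinearMap.adjoint j (φ i) - φ0 i⟫ : ℝ) ^ 2)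
          ≤ Real.sqrt (∑ _i : Fin m, (C*α)^2) :=
            Real.sqrt_le_sqrt (Finset.sum_le_sum fun i _ => hterm i)
        _ = Real.sqrt ((m : ℝ) * (C*α)^2) := by
            rw [Finset.sum_const, Finset.card_univ, Fintype.card_fin, nsmul_eq_mul]
        _ = Real.sqrt m * (C*α) := by
            rw [Real.sqrt_mul (Nat.cast_nonneg m), Real.sqrt_sq hCα]
    have hwb := hw s hsIcc
    rw [← hw_def] at hwb
    calc ‖∑ i, (Real.exp (lam i * (s - t)) * c i) • φ i‖
        ≤ Real.exp (mu*(s-t)) * ‖∑ i, c i • φ i‖ := h1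
      _ ≤ Real.exp (mu*(s-t)) * ((2*L*‖p s - j (p0 s)‖ + (L*C*α + L*β + ρ))
            + Real.sqrt m * (C * α)) := by
          apply mul_le_mul_of_nonneg_left _ (le_of_lt (Real.exp_pos _))
          rw [hsplit]
          exact le_trans (norm_add_le _ _) (add_le_add (le_trans hbessel hwb) hy)
      _ = Real.exp (mu*(s-t)) * (2*L*‖p s - j (p0 s)‖ + B') := by
          rw [hB'_def]; ring
  -- the main integral inequality
  have hmain : ∀ t ∈ Set.Icc (-T) (0:ℝ),
      ‖p t - j (p0 t)‖ ≤ A'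
        + ∫ s in t..0, Real.exp (mu*(s-t)) * (2*L*‖p s - j (p0 s)‖ + B') := by
    intro t ht
    set ff : Fin m → ℝ → ℝ := fun i s => ⟪F (p s + Φ (WithLp.toLp 2 (fun k => ⟪p s, φ k⟫))), φ i⟫ with hff_def
    set f0 : Fin m → ℝ → ℝ := fun i s => ⟪F0 (p0 s + Φ0 (WithLp.toLp 2 (fun k => ⟪p0 s, φ0 k⟫))), φ0 i⟫
      with hf0_def
    have hIccsub : Set.Icc t (0:ℝ) ⊆ Set.Icc (-T) 0 := fun u hu => ⟨le_trans ht.1 hu.1, hu.2⟩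
    have huIcc : Set.uIcc t (0:ℝ) = Set.Icc t 0 := Set.uIcc_of_le ht.2
    -- variation of constants for both systems
    have hvoc : ∀ i : Fin m, ⟪p t, φ i⟫ = Real.exp (-(lam i)*t) * ⟪p 0, φ i⟫
        - Real.exp (-(lam i)*t) * ∫ s in t..0, Real.exp (lam i * s) * ff i s := by
      intro i
      apply myVOC ht.2
      · intro u hu; exact hda i u (hIccsub hu)
      · exact hffint i (fun s => Real.exp (lam i * s))
          (Real.continuous_exp.comp (continuous_const.mul continuous_id)) t ht
    have hvoc0 : ∀ i : Fin m, ⟪p0 t, φ0 i⟫ = Real.exp (-(lam0 i)*t) * ⟪p0 0, φ0 i⟫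
        - Real.exp (-(lam0 i)*t) * ∫ s in t..0, Real.exp (lam0 i * s) * f0 i s := by
      intro i
      apply myVOC ht.2
      · intro u hu; exact hda0 i u (hIccsub hu)
      · exact hf0int i (fun s => Real.exp (lam0 i * s))
          (Real.continuous_exp.comp (continuous_const.mul continuous_id)) t ht
    -- transforming the exponential factors
    have htrans : ∀ (lm : ℝ) (q : ℝ → ℝ),
        Real.exp (-lm*t) * ∫ s in t..0, Real.exp (lm * s) * q s
          = ∫ s in t..0, Real.exp (lm * (s-t)) * q s := by
      intro lm q
      rw [← intervalIntegral.integral_const_mul]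
      apply intervalIntegral.integral_congr
      intro s _
      simp only
      rw [← mul_assoc, ← Real.exp_add]
      congr 2
      ring
    -- integrability of all pieces
    have he1 : ∀ i : Fin m, Continuous (fun s => Real.exp (lam i * (s-t))) := fun i =>
      Real.continuous_exp.comp (continuous_const.mul (continuous_id.sub continuous_const))
    have he0 : ∀ i : Fin m, Continuous (fun s => Real.exp (lam0 i * (s-t))) := fun i =>
      Real.continuous_exp.comp (continuous_const.mul (continuous_id.sub continuous_const))
    have hint1 : ∀ i : Fin m, IntervalIntegrable (fun s => Real.exp (lam i * (s-t)) * ff i s)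
        volume t 0 := fun i => hffint i _ (he1 i) t ht
    have hint2 : ∀ i : Fin m, IntervalIntegrable (fun s => Real.exp (lam i * (s-t)) * f0 i s)
        volume t 0 := fun i => hf0int i _ (he1 i) t ht
    have hint3 : ∀ i : Fin m, IntervalIntegrable (fun s => Real.exp (lam0 i * (s-t)) * f0 i s)
        volume t 0 := fun i => hf0int i _ (he0 i) t ht
    have hintc : ∀ i : Fin m, IntervalIntegrable
        (fun s => Real.exp (lam i * (s-t)) * (ff i s - f0 i s)) volume t 0 := by
      intro i
      have h := (hint1 i).sub (hint2 i)
      have heq : (fun s => Real.exp (lam i * (s-t)) * ff i s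
          - Real.exp (lam i * (s-t)) * f0 i s)
          = fun s => Real.exp (lam i * (s-t)) * (ff i s - f0 i s) := by
        funext s; ring
      rwa [heq] at h
    have hintz : ∀ i : Fin m, IntervalIntegrable
        (fun s => (Real.exp (lam i * (s-t)) - Real.exp (lam0 i * (s-t))) * f0 i s)
        volume t 0 := by
      intro i
      have h := (hint2 i).sub (hint3 i)
      have heq : (fun s => Real.exp (lam i * (s-t)) * f0 i s
          - Real.exp (lam0 i * (s-t)) * f0 i s)
          = fun s => (Real.exp (lam i * (s-t)) - Real.exp (lam0 i * (s-t))) * f0 i s := by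
        funext s; ring
      rwa [heq] at h
    -- the per-coordinate identity
    have hdiff : ∀ i : Fin m, ⟪p t, φ i⟫ - ⟪p0 t, φ0 i⟫
        = (Real.exp (-(lam i)*t) - Real.exp (-(lam0 i)*t)) * ⟪p0 0, φ0 i⟫
          - (∫ s in t..0, Real.exp (lam i * (s-t)) * (ff i s - f0 i s))
          - (∫ s in t..0,
              (Real.exp (lam i * (s-t)) - Real.exp (lam0 i * (s-t))) * f0 i s) := by
      intro i
      have hA := hvoc i
      rw [hinit i, htrans (lam i) (ff i)] at hA
      have hB := hvoc0 i
      rw [htrans (lam0 i) (f0 i)] at hB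
      have hs1 : ∫ s in t..0, Real.exp (lam i * (s-t)) * (ff i s - f0 i s)
          = (∫ s in t..0, Real.exp (lam i * (s-t)) * ff i s)
            - ∫ s in t..0, Real.exp (lam i * (s-t)) * f0 i s := by
        rw [← intervalIntegral.integral_sub (hint1 i) (hint2 i)]
        apply intervalIntegral.integral_congr
        intro s _
        simp only
        ring
      have hs2 : ∫ s in t..0,
            (Real.exp (lam i * (s-t)) - Real.exp (lam0 i * (s-t))) * f0 i s
          = (∫ s in t..0, Real.exp (lam i * (s-t)) * f0 i s)
            - ∫ s in t..0, Real.exp (lam0 i * (s-t)) * f0 i s := by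
        rw [← intervalIntegral.integral_sub (hint2 i) (hint3 i)]
        apply intervalIntegral.integral_congr
        intro s _
        simp only
        ring
      rw [hA, hB, hs1, hs2]
      ring
    -- bound for the first term
    have hb1 : ‖∑ i, ((Real.exp (-(lam i)*t) - Real.exp (-(lam0 i)*t)) * ⟪p0 0, φ0 i⟫) • φ i‖
        ≤ C * γ := by
      refine le_trans (norm_sum_le _ _) ?_
      have hstep : ∀ i : Fin m,
          ‖((Real.exp (-(lam i)*t) - Real.exp (-(lam0 i)*t)) * ⟪p0 0, φ0 i⟫) • φ i‖
            ≤ γ * |⟪p0 0, φ0 i⟫| := by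
        intro i
        rw [norm_smul, hφ.1 i, mul_one, Real.norm_eq_abs, abs_mul]
        exact mul_le_mul_of_nonneg_right
          (hγbound i t ⟨ht.1, le_trans ht.2 hT.le⟩) (abs_nonneg _)
      refine le_trans (Finset.sum_le_sum fun i _ => hstep i) ?_
      rw [← Finset.mul_sum]
      calc γ * ∑ i, |⟪p0 0, φ0 i⟫| ≤ γ * C :=
            mul_le_mul_of_nonneg_left (hC1 0 h0mem) hγ
        _ = C * γ := mul_comm _ _
    -- bound for the middle term
    have hb2 : ‖∑ i, (∫ s in t..0, Real.exp (lam i * (s-t)) * (ff i s - f0 i s)) • φ i‖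
        ≤ ∫ s in t..0, Real.exp (mu*(s-t)) * (2*L*‖p s - j (p0 s)‖ + B') := by
      have hswap : ∑ i, (∫ s in t..0, Real.exp (lam i * (s-t)) * (ff i s - f0 i s)) • φ i
          = ∫ s in t..0, ∑ i, (Real.exp (lam i * (s-t)) * (ff i s - f0 i s)) • φ i := by
        rw [intervalIntegral.integral_finset_sum (fun i _ => ⟨((hintc i).1).smul_const (φ i), ((hintc i).2).smul_const (φ i)⟩)]
        apply Finset.sum_congr rfl
        intro i _
        rw [intervalIntegral.integral_smul_const]
      rw [hswap]
      have hbint : IntervalIntegrable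
          (fun s => Real.exp (mu*(s-t)) * (2*L*‖p s - j (p0 s)‖ + B')) volume t 0 := by
        apply ContinuousOn.intervalIntegrable
        rw [huIcc]
        exact ((Real.continuous_exp.comp
          (continuous_const.mul (continuous_id.sub continuous_const))).continuousOn).mul
          (((continuousOn_const.mul (hgc.mono hIccsub)).add continuousOn_const))
      refine le_trans (intervalIntegral.norm_integral_le_of_norm_le ht.2 ?_ hbint) ?_
      · apply Filter.Eventually.of_forall
        intro s hs
        exact hmid t ht s ⟨hs.1.le, hs.2⟩
      · exact le_rfl
    -- bound for the last term
    have hb3 : ‖∑ i, (∫ s in t..0,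
          (Real.exp (lam i * (s-t)) - Real.exp (lam0 i * (s-t))) * f0 i s) • φ i‖
        ≤ C * γ * T := by
      have hICabs : ∀ i : Fin m, IntervalIntegrable (fun s => γ * |f0 i s|) volume t 0 :=
        fun i => hf0intabs i (fun _ => γ) continuous_const t ht
      have hstep : ∀ i : Fin m, ‖(∫ s in t..0,
            (Real.exp (lam i * (s-t)) - Real.exp (lam0 i * (s-t))) * f0 i s) • φ i‖
          ≤ ∫ s in t..0, γ * |f0 i s| := by
        intro i
        rw [norm_smul, hφ.1 i, mul_one]
        refine le_trans (intervalIntegral.norm_integral_le_of_norm_le ht.2 ?_ (hICabs i)) ?_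
        · apply Filter.Eventually.of_forall
          intro s hs
          rw [Real.norm_eq_abs, abs_mul]
          apply mul_le_mul_of_nonneg_right _ (abs_nonneg _)
          have harg1 : lam i * (s-t) = -(lam i) * (t-s) := by ring
          have harg0 : lam0 i * (s-t) = -(lam0 i) * (t-s) := by ring
          rw [harg1, harg0]
          exact hγbound i (t-s) ⟨by linarith [ht.1, hs.2], by linarith [hs.1, hT.le]⟩
        · exact le_rfl
      refine le_trans (norm_sum_le _ _) (le_trans (Finset.sum_le_sum fun i _ => hstep i) ?_)
      rw [← intervalIntegral.integral_finset_sum (fun i _ => hICabs i)]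
      have hCint : IntervalIntegrable (fun _ : ℝ => γ * C) volume t 0 :=
        intervalIntegrable_const
      have hintsum : IntervalIntegrable (fun s => ∑ i, γ * |f0 i s|) volume t 0 := by
        rw [intervalIntegrable_iff_integrableOn_Ioc_of_le ht.2]
        refine ⟨?_, ?_⟩
        · apply Finset.aestronglyMeasurable_fun_sum
          intro i _
          have h := ((hf0meas i t ht).norm.const_mul γ)
          simpa [Real.norm_eq_abs] using h
        · apply HasFiniteIntegral.restrict_of_bounded (C := γ * C) measure_Ioc_lt_top
          rw [ae_restrict_iff' measurableSet_Ioc]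
          apply Filter.Eventually.of_forall
          intro s hs
          have hsub : s ∈ Set.Icc (-T) (0:ℝ) := ⟨le_trans ht.1 (le_of_lt hs.1), hs.2⟩
          rw [Real.norm_eq_abs, ← Finset.mul_sum, abs_mul, abs_of_nonneg hγ,
            abs_of_nonneg (Finset.sum_nonneg fun i _ => abs_nonneg (f0 i s))]
          exact mul_le_mul_of_nonneg_left (hC2 s hsub) hγ
      calc ∫ s in t..0, ∑ i, γ * |f0 i s|
          ≤ ∫ _s in t..0, γ * C := by
            apply intervalIntegral.integral_mono_on ht.2 hintsum hCint
            intro s hs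
            rw [← Finset.mul_sum]
            exact mul_le_mul_of_nonneg_left (hC2 s (hIccsub hs)) hγ
        _ = (0 - t) * (γ * C) := by rw [intervalIntegral.integral_const, smul_eq_mul]
        _ ≤ T * (γ * C) := by
            apply mul_le_mul_of_nonneg_right _ (by positivity)
            linarith [ht.1]
        _ = C * γ * T := by ring
    -- assemble
    have hDeq : ∑ i, (⟪p t, φ i⟫ - ⟪p0 t, φ0 i⟫) • φ i
        = (∑ i, ((Real.exp (-(lam i)*t) - Real.exp (-(lam0 i)*t)) * ⟪p0 0, φ0 i⟫) • φ i)
          - (∑ i, (∫ s in t..0, Real.exp (lam i * (s-t)) * (ff i s - f0 i s)) • φ i)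
          - ∑ i, (∫ s in t..0,
              (Real.exp (lam i * (s-t)) - Real.exp (lam0 i * (s-t))) * f0 i s) • φ i := by
      rw [← Finset.sum_sub_distrib, ← Finset.sum_sub_distrib]
      apply Finset.sum_congr rfl
      intro i _
      rw [hdiff i, sub_smul, sub_smul]
    have hDb : ‖∑ i, (⟪p t, φ i⟫ - ⟪p0 t, φ0 i⟫) • φ i‖
        ≤ C * γ + (∫ s in t..0, Real.exp (mu*(s-t)) * (2*L*‖p s - j (p0 s)‖ + B'))
          + C * γ * T := by
      rw [hDeq]
      refine le_trans (norm_sub_le _ _) ?_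
      refine le_trans (add_le_add (norm_sub_le _ _) hb3) ?_
      refine le_trans (add_le_add_left (add_le_add hb1 hb2) _) ?_
      linarith
    have := hgD t ht
    rw [hA'_def]
    linarith [hDb]
  -- Gronwall and conclusion
  set clamp : ℝ → ℝ := fun s => max (-T) (min s 0) with hclamp_def
  have hclamp_mem : ∀ s : ℝ, clamp s ∈ Set.Icc (-T) (0:ℝ) := fun s =>
    ⟨le_max_left _ _, max_le hT0 (min_le_right _ _)⟩
  have hclamp_eq : ∀ s ∈ Set.Icc (-T) (0:ℝ), clamp s = s := by
    intro s hs
    rw [hclamp_def]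
    simp only
    rw [min_eq_left hs.2, max_eq_right hs.1]
  have hclampc : Continuous clamp := continuous_const.max (continuous_id.min continuous_const)
  set gbar : ℝ → ℝ := fun s => ‖p (clamp s) - j (p0 (clamp s))‖ with hgbar_def
  have hgbarc : Continuous gbar := hgc.comp_continuous hclampc hclamp_mem
  have hgbar_eq : ∀ s ∈ Set.Icc (-T) (0:ℝ), gbar s = ‖p s - j (p0 s)‖ := by
    intro s hs
    rw [hgbar_def]
    simp only
    rw [hclamp_eq s hs]
  have hgbar0 : ∀ s, 0 ≤ gbar s := fun s => norm_nonneg _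
  set G : ℝ → ℝ := fun τ => Real.exp (-mu*τ) * gbar (-τ) with hG_def
  have hGc : Continuous G :=
    (Real.continuous_exp.comp (continuous_const.mul continuous_id)).mul
      (hgbarc.comp continuous_neg)
  have hG0 : ∀ τ, 0 ≤ G τ := fun τ => mul_nonneg (Real.exp_pos _).le (hgbar0 _)
  set cst : ℝ := A' + B'/mu with hcst_def
  have hGineq : ∀ τ ∈ Set.Icc (0:ℝ) T, G τ ≤ cst + (2*L) * ∫ σ in (0:ℝ)..τ, G σ := by
    intro τ hτ
    have hmem : -τ ∈ Set.Icc (-T) (0:ℝ) := ⟨by linarith [hτ.2], by linarith [hτ.1]⟩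
    have h1 := hmain (-τ) hmem
    have hGτ : G τ = Real.exp (-mu*τ) * ‖p (-τ) - j (p0 (-τ))‖ := by
      rw [hG_def]
      simp only
      rw [hgbar_eq (-τ) hmem]
    have h2 : G τ ≤ Real.exp (-mu*τ) * A' + Real.exp (-mu*τ)
        * ∫ s in (-τ)..0, Real.exp (mu*(s-(-τ))) * (2*L*‖p s - j (p0 s)‖ + B') := by
      rw [hGτ, ← mul_add]
      exact mul_le_mul_of_nonneg_left h1 (Real.exp_pos _).le
    have h3 : Real.exp (-mu*τ)
          * ∫ s in (-τ)..0, Real.exp (mu*(s-(-τ))) * (2*L*‖p s - j (p0 s)‖ + B')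
        = ∫ s in (-τ)..0, Real.exp (mu*s) * (2*L*gbar s + B') := by
      rw [← intervalIntegral.integral_const_mul]
      apply intervalIntegral.integral_congr
      intro s hs
      rw [Set.uIcc_of_le (by linarith [hτ.1] : -τ ≤ (0:ℝ))] at hs
      have hmem2 : s ∈ Set.Icc (-T) (0:ℝ) := ⟨by linarith [hτ.2, hs.1], hs.2⟩
      simp only
      rw [hgbar_eq s hmem2, ← mul_assoc, ← Real.exp_add,
        show -mu*τ + mu*(s - -τ) = mu*s by ring]
    have hca : Continuous (fun s => Real.exp (mu*s) * (2*L*gbar s)) :=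
      (Real.continuous_exp.comp (continuous_const.mul continuous_id)).mul
        (continuous_const.mul hgbarc)
    have hcb : Continuous (fun s => Real.exp (mu*s) * B') :=
      (Real.continuous_exp.comp (continuous_const.mul continuous_id)).mul continuous_const
    have h4 : ∫ s in (-τ)..0, Real.exp (mu*s) * (2*L*gbar s + B')
        = (∫ s in (-τ)..0, Real.exp (mu*s) * (2*L*gbar s))
          + ∫ s in (-τ)..0, Real.exp (mu*s) * B' := by
      rw [← intervalIntegral.integral_add (hca.intervalIntegrable _ _)
        (hcb.intervalIntegrable _ _)]
      apply intervalIntegral.integral_congr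
      intro s _
      simp only
      ring
    have h5 : ∫ s in (-τ)..0, Real.exp (mu*s) * (2*L*gbar s)
        = (2*L) * ∫ σ in (0:ℝ)..τ, G σ := by
      have hcomp := intervalIntegral.integral_comp_neg (a := (0:ℝ)) (b := τ)
        (f := fun s => Real.exp (mu*s) * (2*L*gbar s))
      rw [neg_zero] at hcomp
      rw [← hcomp, ← intervalIntegral.integral_const_mul]
      apply intervalIntegral.integral_congr
      intro σ _
      simp only
      rw [hG_def]
      simp only
      rw [show mu*(-σ) = -mu*σ by ring]
      ring
    have h6 : ∫ s in (-τ)..0, Real.exp (mu*s) * B' ≤ B'/mu := by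
      have hFd : ∀ s ∈ Set.uIcc (-τ) (0:ℝ),
          HasDerivAt (fun u => Real.exp (mu*u)/mu) (Real.exp (mu*s)) s := by
        intro s _
        have h1' := ((Real.hasDerivAt_exp (mu * s)).comp s
          ((hasDerivAt_id s).const_mul mu)).div_const mu
        refine h1'.congr_deriv (Eq.symm ?_)
        field_simp
      have hval : ∫ s in (-τ)..0, Real.exp (mu*s)
          = Real.exp (mu*0)/mu - Real.exp (mu*(-τ))/mu :=
        intervalIntegral.integral_eq_sub_of_hasDerivAt hFd
          ((Real.continuous_exp.comp (continuous_const.mul continuous_id)).intervalIntegrable _ _)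
      rw [intervalIntegral.integral_mul_const, hval]
      rw [mul_zero, Real.exp_zero]
      have hexpT : 0 ≤ Real.exp (mu*(-τ))/mu := div_nonneg (Real.exp_pos _).le hmupos.le
      have hB'mu : (1/mu - Real.exp (mu*(-τ))/mu) * B' ≤ (1/mu) * B' := by
        apply mul_le_mul_of_nonneg_right _ hB'0
        linarith
      calc (1/mu - Real.exp (mu*(-τ))/mu) * B' ≤ (1/mu) * B' := hB'mu
        _ = B'/mu := by ring
    have hexp1 : Real.exp (-mu*τ) ≤ 1 := by
      apply Real.exp_le_one_iff.2
      have := mul_nonneg hmupos.le hτ.1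
      linarith
    have hA'exp : Real.exp (-mu*τ) * A' ≤ A' := by
      nlinarith [hA'0]
    calc G τ ≤ Real.exp (-mu*τ) * A' + Real.exp (-mu*τ)
          * ∫ s in (-τ)..0, Real.exp (mu*(s-(-τ))) * (2*L*‖p s - j (p0 s)‖ + B') := h2
      _ = Real.exp (-mu*τ) * A'
          + ((∫ s in (-τ)..0, Real.exp (mu*s) * (2*L*gbar s))
            + ∫ s in (-τ)..0, Real.exp (mu*s) * B') := by rw [h3, h4]
      _ ≤ A' + ((2*L) * (∫ σ in (0:ℝ)..τ, G σ) + B'/mu) := by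
          rw [h5]
          exact add_le_add hA'exp (add_le_add_right h6 _)
      _ = cst + (2*L) * ∫ σ in (0:ℝ)..τ, G σ := by rw [hcst_def]; ring
  have hfin := myGronwall (T := T) (K := 2*L) (c := cst) (by linarith) hGc
    (fun σ _ => hG0 σ) hGineq
  intro t ht
  have hτmem : -t ∈ Set.Icc (0:ℝ) T := ⟨by linarith [ht.2], by linarith [ht.1]⟩
  have h7 := hfin (-t) hτmem
  have hGt : G (-t) = Real.exp (mu*t) * ‖p t - j (p0 t)‖ := by
    rw [hG_def]
    simp only
    rw [neg_neg, hgbar_eq t ht, show -mu*(-t) = mu*t by ring]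
  rw [hGt] at h7
  have h8 : ‖p t - j (p0 t)‖ ≤ cst * Real.exp (-(2*L+mu)*t) := by
    have h9 := mul_le_mul_of_nonneg_left h7 (Real.exp_pos (-(mu*t))).le
    rw [← mul_assoc, ← Real.exp_add, neg_add_cancel, Real.exp_zero, one_mul] at h9
    rw [mul_left_comm, ← Real.exp_add] at h9
    calc ‖p t - j (p0 t)‖ ≤ cst * Real.exp (-(mu*t) + 2*L*(-t)) := h9
      _ = cst * Real.exp (-(2*L+mu)*t) := by
          congr 1
          ring_nf
  have hBB : B' ≤ L * β + (L + 1 + Real.sqrt m) * C * α + ρ := by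
    rw [hB'_def]
    nlinarith [hCα, Real.sqrt_nonneg (m:ℝ)]
  have hKK : cst ≤ C * (1 + 2 * T) * γ + C * α
      + (L * β + (L + 1 + Real.sqrt m) * C * α + ρ) / (lam0m + 1) := by
    rw [hcst_def, hA'_def]
    have hdiv : B'/mu ≤ (L * β + (L + 1 + Real.sqrt m) * C * α + ρ) / (lam0m + 1) := by
      rw [hmu_def]
      exact div_le_div_of_nonneg_right hBB (by linarith)
    nlinarith [hdiv, mul_nonneg (mul_nonneg hC hγ) hT.le]
  calc ‖p t - j (p0 t)‖ ≤ cst * Real.exp (-(2*L+mu)*t) := h8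
    _ ≤ (C * (1 + 2 * T) * γ + C * α
          + (L * β + (L + 1 + Real.sqrt m) * C * α + ρ) / (lam0m + 1))
        * Real.exp (-(2*L+mu)*t) :=
      mul_le_mul_of_nonneg_right hKK (Real.exp_pos _).le
    _ = (C * (1 + 2 * T) * γ + C * α
          + (L * β + (L + 1 + Real.sqrt m) * C * α + ρ) / (lam0m + 1))
        * Real.exp (-(2 * L + lam0m + 1) * t) := by
      congr 2
      rw [hmu_def]
      ring
end

section
/- Assume in addition that there is a real r with 0 < r ≤ λ_i^0 and r ≤ λ_i for all i = 1,…,m, and that the time interval is J = [0,T] (so the ODEs and the bounds β, C hold for all t ∈ [0,T]). Then for every t ∈ [0,T]: ‖p(t) − j p_0(t)‖ ≤ ( C(1+2T)γ + Cα + (Lβ + (L+1+√m)Cα + ρ)/r ) · e^{2Lt}. (This is the forward-in-time estimate of the paper's Lemma 3.3.) -/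
open RealInnerProductSpace MeasureTheory Set intervalIntegral Real

section Aux
variable {H : Type*} [NormedAddCommGroup H] [InnerProductSpace ℝ H]
  {m : ℕ} {φ : Fin m → H}

lemma aux_repr (hφ : Orthonormal ℝ φ) {x : H}
    (hx : x ∈ Submodule.span ℝ (Set.range φ)) :
    x = ∑ i, ⟪x, φ i⟫ • φ i := by
  obtain ⟨c, rfl⟩ := (Submodule.mem_span_range_iff_exists_fun ℝ).1 hx
  refine Finset.sum_congr rfl fun i _ => ?_
  rw [hφ.inner_left_fintype]
  simp

lemma aux_norm_sq (hφ : Orthonormal ℝ φ) (c : Fin m → ℝ) :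
    ‖∑ i, c i • φ i‖ ^ 2 = ∑ i, (c i) ^ 2 := by
  rw [← real_inner_self_eq_norm_sq, sum_inner]
  refine Finset.sum_congr rfl fun i _ => ?_
  rw [real_inner_smul_left, hφ.inner_right_fintype]
  ring

lemma aux_norm_le_l1 (hφ : Orthonormal ℝ φ) (c : Fin m → ℝ) :
    ‖∑ i, c i • φ i‖ ≤ ∑ i, |c i| := by
  refine (norm_sum_le _ _).trans ?_
  refine Finset.sum_le_sum fun i _ => ?_
  rw [norm_smul, hφ.1 i]
  simp [Real.norm_eq_abs]

lemma aux_bessel (hφ : Orthonormal ℝ φ) (x : H) :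
    ‖∑ i, ⟪x, φ i⟫ • φ i‖ ≤ ‖x‖ := by
  have h1 := aux_norm_sq hφ (fun i => ⟪x, φ i⟫)
  have h2 : ∑ i, ⟪x, φ i⟫ ^ 2 ≤ ‖x‖ ^ 2 := by
    have := hφ.sum_inner_products_le (s := Finset.univ) x
    simpa [Real.norm_eq_abs, sq_abs, real_inner_comm] using this
  have := h1.trans_le h2
  nlinarith [norm_nonneg (∑ i, ⟪x, φ i⟫ • φ i), norm_nonneg x]

/-- compare two orthonormal expansions coefficientwise -/
lemma aux_norm_le_of_coeff_le (hφ : Orthonormal ℝ φ) {c d : Fin m → ℝ}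
    (h : ∀ i, |c i| ≤ |d i|) :
    ‖∑ i, c i • φ i‖ ≤ ‖∑ i, d i • φ i‖ := by
  have h1 := aux_norm_sq hφ c
  have h2 := aux_norm_sq hφ d
  have : ∑ i, c i ^ 2 ≤ ∑ i, d i ^ 2 :=
    Finset.sum_le_sum fun i _ => by
      nlinarith [h i, abs_nonneg (c i), abs_nonneg (d i), sq_abs (c i), sq_abs (d i)]
  nlinarith [norm_nonneg (∑ i, c i • φ i), norm_nonneg (∑ i, d i • φ i)]

lemma aux_euclid_norm (hφ : Orthonormal ℝ φ) (z : EuclideanSpace ℝ (Fin m)) :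
    ‖z‖ = ‖∑ i, z i • φ i‖ := by
  have h1 := aux_norm_sq hφ (fun i => z i)
  rw [EuclideanSpace.norm_eq,
    show (∑ i, ‖z i‖ ^ 2) = ∑ i, z i ^ 2 from
      Finset.sum_congr rfl fun i _ => by rw [Real.norm_eq_abs, sq_abs],
    ← h1, Real.sqrt_sq (norm_nonneg _)]

end Aux

/-- Duhamel formula. -/
lemma aux_duhamel {c T : ℝ} {x g : ℝ → ℝ}
    (hx : ∀ t ∈ Set.Icc (0:ℝ) T, HasDerivAt x (-c * x t + g t) t)
    (hgi : ∀ t ∈ Set.Icc (0:ℝ) T, IntervalIntegrable g volume 0 t) :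
    ∀ t ∈ Set.Icc (0:ℝ) T,
      x t = Real.exp (-c * t) * x 0
        + ∫ s in (0:ℝ)..t, Real.exp (-c * (t - s)) * g s := by
  intro t ht
  have hIcc : Set.uIcc (0:ℝ) t = Set.Icc 0 t := Set.uIcc_of_le ht.1
  have hsub : Set.Icc (0:ℝ) t ⊆ Set.Icc 0 T := Set.Icc_subset_Icc le_rfl ht.2
  have hderiv : ∀ s ∈ Set.uIcc (0:ℝ) t,
      HasDerivAt (fun s => Real.exp (c * s) * x s)
        (Real.exp (c * s) * g s) s := by
    intro s hs
    have hs' := hsub (hIcc ▸ hs)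
    have h1 : HasDerivAt (fun s => Real.exp (c * s)) (c * Real.exp (c * s)) s := by
      have := (Real.hasDerivAt_exp (c * s)).comp s ((hasDerivAt_id s).const_mul c)
      exact this.congr_deriv (by ring)
    have := h1.mul (hx s hs')
    exact this.congr_deriv (by ring)
  have hint : IntervalIntegrable (fun s => Real.exp (c * s) * g s) volume 0 t := by
    exact (hgi t ht).continuousOn_mul (Real.continuous_exp.comp (continuous_const.mul continuous_id)).continuousOn
  have hFTC := integral_eq_sub_of_hasDerivAt hderiv hint
  have hxt : Real.exp (c * t) * x t
      = x 0 + ∫ s in (0:ℝ)..t, Real.exp (c * s) * g s := by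
    rw [hFTC]; simp [Real.exp_zero]
  calc x t = Real.exp (-c * t) * (Real.exp (c * t) * x t) := by
        rw [← mul_assoc, ← Real.exp_add]; simp
    _ = Real.exp (-c * t) * (x 0 + ∫ s in (0:ℝ)..t, Real.exp (c * s) * g s) := by
        rw [hxt]
    _ = Real.exp (-c * t) * x 0
        + ∫ s in (0:ℝ)..t, Real.exp (-c * (t - s)) * g s := by
        rw [mul_add, ← intervalIntegral.integral_const_mul]
        congr 1
        refine intervalIntegral.integral_congr fun s hs => ?_
        rw [← mul_assoc, ← Real.exp_add]
        congr 2
        ring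

lemma aux_exp_integral {r t : ℝ} (hr : 0 < r) :
    ∫ s in (0:ℝ)..t, Real.exp (-r * (t - s)) = (1 - Real.exp (-r * t)) / r := by
  have hderiv : ∀ s ∈ Set.uIcc (0:ℝ) t,
      HasDerivAt (fun s => Real.exp (-r * (t - s)) / r) (Real.exp (-r * (t - s))) s := by
    intro s _
    have h1 : HasDerivAt (fun s : ℝ => -r * (t - s)) r s := by
      simpa using ((hasDerivAt_id s).const_sub t).const_mul (-r)
    have := ((Real.hasDerivAt_exp (-r * (t - s))).comp s h1).div_const r
    exact this.congr_deriv (by field_simp)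
  have hint : IntervalIntegrable (fun s => Real.exp (-r * (t - s))) MeasureTheory.volume 0 t :=
    (Real.continuous_exp.comp (continuous_const.mul (continuous_const.sub continuous_id))).intervalIntegrable _ _
  have := intervalIntegral.integral_eq_sub_of_hasDerivAt hderiv hint
  rw [this]
  simp [sub_div]

lemma aux_gronwall {T K L : ℝ} (hK : 0 ≤ K) (hL : 0 < L) {f : ℝ → ℝ}
    (hT : 0 ≤ T)
    (hfc : ContinuousOn f (Set.Icc 0 T))
    (hf0 : ∀ t ∈ Set.Icc (0:ℝ) T, 0 ≤ f t)
    (hineq : ∀ t ∈ Set.Icc (0:ℝ) T, f t ≤ K + 2 * L * ∫ s in (0:ℝ)..t, f s) :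
    ∀ t ∈ Set.Icc (0:ℝ) T, f t ≤ K * Real.exp (2 * L * t) := by
  classical
  set g : ℝ → ℝ := fun s => f (max 0 (min s T)) with hg
  have hmem : ∀ s : ℝ, max 0 (min s T) ∈ Set.Icc (0:ℝ) T := fun s =>
    ⟨le_max_left _ _, max_le hT (min_le_right _ _)⟩
  have hclamp : ∀ s ∈ Set.Icc (0:ℝ) T, max 0 (min s T) = s := fun s hs => by
    rw [min_eq_left hs.2, max_eq_right hs.1]
  have hgc : Continuous g :=
    hfc.comp_continuous (continuous_const.max (continuous_id.min continuous_const)) hmem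
  have hgeq : ∀ s ∈ Set.Icc (0:ℝ) T, g s = f s := fun s hs => by
    rw [hg]; simp only; rw [hclamp s hs]
  have hg0 : ∀ s : ℝ, 0 ≤ g s := fun s => hf0 _ (hmem s)
  have hint : ∀ t ∈ Set.Icc (0:ℝ) T, (∫ s in (0:ℝ)..t, g s) = ∫ s in (0:ℝ)..t, f s := by
    intro t ht
    refine intervalIntegral.integral_congr fun s hs => ?_
    rw [Set.uIcc_of_le ht.1] at hs
    exact hgeq s ⟨hs.1, hs.2.trans ht.2⟩
  set G : ℝ → ℝ := fun t => ∫ s in (0:ℝ)..t, g s with hGdef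
  have hG : ∀ t : ℝ, HasDerivAt G (g t) t := fun t =>
    intervalIntegral.integral_hasDerivAt_right (hgc.intervalIntegrable _ _)
      ⟨Set.univ, Filter.univ_mem, (hgc.stronglyMeasurable).aestronglyMeasurable.restrict⟩
      hgc.continuousAt
  have hGc : ContinuousOn G (Set.Icc 0 T) := fun t _ => (hG t).continuousAt.continuousWithinAt
  have hG0 : ∀ t, 0 ≤ t → 0 ≤ G t := fun t ht =>
    intervalIntegral.integral_nonneg ht fun s _ => hg0 s
  have hb := norm_le_gronwallBound_of_norm_deriv_right_le (a := 0) (b := T) (δ := 0)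
      (K := 2*L) (ε := K) (f' := g) hGc (fun t _ => (hG t).hasDerivWithinAt)
      (by simp [hGdef]) ?_
  · intro t ht
    have h1 := hineq t ht
    have h2 := hb t ht
    rw [Real.norm_eq_abs, abs_of_nonneg (hG0 t ht.1)] at h2
    rw [gronwallBound_of_K_ne_0 (by positivity)] at h2
    have h3 : G t = ∫ s in (0:ℝ)..t, f s := hint t ht
    rw [h3] at h2
    have h2L : (0:ℝ) < 2 * L := by positivity
    calc f t ≤ K + 2 * L * ∫ s in (0:ℝ)..t, f s := h1
      _ ≤ K + 2 * L * (0 * Real.exp (2*L*(t-0)) + K / (2*L) * (Real.exp (2*L*(t-0)) - 1)) := by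
          nlinarith
      _ = K * Real.exp (2 * L * t) := by field_simp; ring
  · intro t ht
    have hGt := hG0 t ht.1
    rw [Real.norm_eq_abs, abs_of_nonneg (hg0 t), Real.norm_eq_abs, abs_of_nonneg hGt]
    have := hineq t ⟨ht.1, ht.2.le⟩
    rw [← hint t ⟨ht.1, ht.2.le⟩] at this
    rw [← hgeq t ⟨ht.1, ht.2.le⟩] at this
    linarith

section Aux
variable {H : Type*} [NormedAddCommGroup H] [InnerProductSpace ℝ H]
  {m : ℕ} {φ : Fin m → H}

lemma aux_smul_const {c : ℝ → ℝ} {a b : ℝ} (hc : IntervalIntegrable c volume a b) (x : H) :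
    IntervalIntegrable (fun s => c s • x) volume a b := by
  rw [intervalIntegrable_iff] at hc ⊢
  exact hc.smul_const x

end Aux

set_option maxHeartbeats 1000000 in
/-- The forward-in-time estimate of Lemma 3.3 of the paper, on the interval `[0,T]`,
where `r` is a positive lower bound of all the eigenvalues `λ_i^0` and `λ_i`. -/
theorem stmt2
    {H0 H : Type*} [NormedAddCommGroup H0] [InnerProductSpace ℝ H0] [CompleteSpace H0]
    [NormedAddCommGroup H] [InnerProductSpace ℝ H] [CompleteSpace H]
    {m : ℕ} (hm : 1 ≤ m)
    (φ0 : Fin m → H0) (φ : Fin m → H)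
    (hφ0 : Orthonormal ℝ φ0) (hφ : Orthonormal ℝ φ)
    (lam0 lam : Fin m → ℝ)
    (hlam0pos : ∀ i, 0 < lam0 i) (hlam0mono : Monotone lam0)
    (hlampos : ∀ i, 0 < lam i)
    (j : H0 →L[ℝ] H) (hj : ‖j‖ ≤ 2)
    (F0 : H0 → H0) (F : H → H) (L : ℝ) (hL : 0 < L)
    (hFlip : LipschitzWith L.toNNReal F)
    (Φ0 : EuclideanSpace ℝ (Fin m) → H0) (Φ : EuclideanSpace ℝ (Fin m) → H)
    (hΦlip : LipschitzWith 1 Φ)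
    (T : ℝ) (hT : 0 < T)
    (p0 : ℝ → H0) (p : ℝ → H)
    (hp0span : ∀ t, p0 t ∈ Submodule.span ℝ (Set.range φ0))
    (hpspan : ∀ t, p t ∈ Submodule.span ℝ (Set.range φ))
    (hode0 : ∀ t ∈ Set.Icc (0:ℝ) T, HasDerivAt p0
      (-(∑ i, (lam0 i * ⟪p0 t, φ0 i⟫) • φ0 i)
        + ∑ i, ⟪F0 (p0 t + Φ0 (WithLp.toLp 2 (fun i => ⟪p0 t, φ0 i⟫))), φ0 i⟫ • φ0 i) t)
    (hode : ∀ t ∈ Set.Icc (0:ℝ) T, HasDerivAt p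
      (-(∑ i, (lam i * ⟪p t, φ i⟫) • φ i)
        + ∑ i, ⟪F (p t + Φ (WithLp.toLp 2 (fun i => ⟪p t, φ i⟫))), φ i⟫ • φ i) t)
    (hinit : ∀ i, ⟪p 0, φ i⟫ = ⟪p0 0, φ0 i⟫)
    (α γ ρ β C : ℝ)
    (hα : 0 ≤ α) (hγ : 0 ≤ γ) (hρ : 0 ≤ ρ) (hβ : 0 ≤ β) (hC : 0 ≤ C)
    (hjφ : ∀ i, ‖j (φ0 i) - φ i‖ ≤ α)
    (hjadj : ∀ i, ‖ContinuousLinearMap.adjoint j (φ i) - φ0 i‖ ≤ α)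
    (hγbound : ∀ i, ∀ t ∈ Set.Icc (-T) T,
      |Real.exp (-(lam i) * t) - Real.exp (-(lam0 i) * t)| ≤ γ)
    (hρbound : ∀ u : H0, ‖F (j u) - j (F0 u)‖ ≤ ρ)
    (r : ℝ) (hr : 0 < r) (hrlam0 : ∀ i, r ≤ lam0 i) (hrlam : ∀ i, r ≤ lam i)
    (hβbound : ∀ t ∈ Set.Icc (0:ℝ) T,
      ‖Φ (WithLp.toLp 2 (fun i => ⟪p0 t, φ0 i⟫)) - j (Φ0 (WithLp.toLp 2 (fun i => ⟪p0 t, φ0 i⟫)))‖ ≤ β)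
    (hC1 : ∀ t ∈ Set.Icc (0:ℝ) T, ∑ i, |⟪p0 t, φ0 i⟫| ≤ C)
    (hC2 : ∀ t ∈ Set.Icc (0:ℝ) T,
      ∑ i, |⟪F0 (p0 t + Φ0 (WithLp.toLp 2 (fun i => ⟪p0 t, φ0 i⟫))), φ0 i⟫| ≤ C)
    (hC3 : ∀ t ∈ Set.Icc (0:ℝ) T,
      ‖F0 (p0 t + Φ0 (WithLp.toLp 2 (fun i => ⟪p0 t, φ0 i⟫)))‖ ≤ C) :
    ∀ t ∈ Set.Icc (0:ℝ) T,
      ‖p t - j (p0 t)‖ ≤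
        (C * (1 + 2 * T) * γ + C * α
            + (L * β + (L + 1 + Real.sqrt m) * C * α + ρ) / r)
          * Real.exp (2 * L * t) := by
  classical
  have hL0 : (0:ℝ) ≤ L := hL.le
  have hCα : (0:ℝ) ≤ C * α := mul_nonneg hC hα
  -- Lipschitz reformulations
  have hF' : ∀ x y : H, ‖F x - F y‖ ≤ L * ‖x - y‖ := by
    intro x y
    have := hFlip.dist_le_mul x y
    rw [dist_eq_norm, dist_eq_norm] at this
    rwa [Real.coe_toNNReal _ hL0] at this
  have hΦ' : ∀ x y : EuclideanSpace ℝ (Fin m), ‖Φ x - Φ y‖ ≤ ‖x - y‖ := by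
    intro x y
    have := hΦlip.dist_le_mul x y
    rw [dist_eq_norm, dist_eq_norm] at this
    simpa using this
  -- continuity
  have hpc : ContinuousOn p (Set.Icc 0 T) :=
    fun s hs => (hode s hs).continuousAt.continuousWithinAt
  have hp0c : ContinuousOn p0 (Set.Icc 0 T) :=
    fun s hs => (hode0 s hs).continuousAt.continuousWithinAt
  have hfc : ContinuousOn (fun s => ‖p s - j (p0 s)‖) (Set.Icc 0 T) :=
    (hpc.sub (j.continuous.comp_continuousOn hp0c)).norm
  have hac : ∀ i, ContinuousOn (fun s => ⟪p s, φ i⟫) (Set.Icc 0 T) :=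
    fun i => hpc.inner continuousOn_const
  have hbc : ∀ i, ContinuousOn (fun s => ⟪p0 s, φ0 i⟫) (Set.Icc 0 T) :=
    fun i => hp0c.inner continuousOn_const
  have hψc : ContinuousOn
      (fun s => (WithLp.toLp 2 (fun i => ⟪p s, φ i⟫) : EuclideanSpace ℝ (Fin m))) (Set.Icc 0 T) := by
    exact (by fun_prop : Continuous (WithLp.toLp 2 : (Fin m → ℝ) → EuclideanSpace ℝ (Fin m))).comp_continuousOn
      (continuousOn_pi.2 hac)
  have hPc : ContinuousOn (fun s => p s + Φ (WithLp.toLp 2 (fun i => ⟪p s, φ i⟫))) (Set.Icc 0 T) :=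
    hpc.add (hΦlip.continuous.comp_continuousOn hψc)
  have hgc : ∀ i, ContinuousOn
      (fun s => ⟪F (p s + Φ (WithLp.toLp 2 (fun i => ⟪p s, φ i⟫))), φ i⟫) (Set.Icc 0 T) :=
    fun i => (hFlip.continuous.comp_continuousOn hPc).inner continuousOn_const
  -- scalar ODEs
  have hda : ∀ i, ∀ s ∈ Set.Icc (0:ℝ) T, HasDerivAt (fun τ => ⟪p τ, φ i⟫)
      (-(lam i) * ⟪p s, φ i⟫ + ⟪F (p s + Φ (WithLp.toLp 2 (fun i => ⟪p s, φ i⟫))), φ i⟫) s := by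
    intro i s hs
    have h1 := (innerSL ℝ (φ i)).hasFDerivAt.comp_hasDerivAt s (hode s hs)
    simp only [Function.comp_def] at h1
    have h2 : (fun τ => (innerSL ℝ (φ i)) (p τ)) = fun τ => ⟪p τ, φ i⟫ := by
      funext τ
      simp only [innerSL_apply_apply]
      exact real_inner_comm _ _
    rw [h2] at h1
    refine h1.congr_deriv ?_
    rw [innerSL_apply_apply, inner_add_right, inner_neg_right,
      hφ.inner_right_fintype (fun k => lam k * ⟪p s, φ k⟫),
      hφ.inner_right_fintype (fun k => ⟪F (p s + Φ (WithLp.toLp 2 (fun i => ⟪p s, φ i⟫))), φ k⟫)]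
    ring
  have hdb : ∀ i, ∀ s ∈ Set.Icc (0:ℝ) T, HasDerivAt (fun τ => ⟪p0 τ, φ0 i⟫)
      (-(lam0 i) * ⟪p0 s, φ0 i⟫ + ⟪F0 (p0 s + Φ0 (WithLp.toLp 2 (fun i => ⟪p0 s, φ0 i⟫))), φ0 i⟫) s := by
    intro i s hs
    have h1 := (innerSL ℝ (φ0 i)).hasFDerivAt.comp_hasDerivAt s (hode0 s hs)
    simp only [Function.comp_def] at h1
    have h2 : (fun τ => (innerSL ℝ (φ0 i)) (p0 τ)) = fun τ => ⟪p0 τ, φ0 i⟫ := by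
      funext τ
      simp only [innerSL_apply_apply]
      exact real_inner_comm _ _
    rw [h2] at h1
    refine h1.congr_deriv ?_
    rw [innerSL_apply_apply, inner_add_right, inner_neg_right,
      hφ0.inner_right_fintype (fun k => lam0 k * ⟪p0 s, φ0 k⟫),
      hφ0.inner_right_fintype (fun k => ⟪F0 (p0 s + Φ0 (WithLp.toLp 2 (fun i => ⟪p0 s, φ0 i⟫))), φ0 k⟫)]
    ring
  -- bound on h
  have hhb : ∀ i, ∀ s ∈ Set.Icc (0:ℝ) T,
      |⟪F0 (p0 s + Φ0 (WithLp.toLp 2 (fun i => ⟪p0 s, φ0 i⟫))), φ0 i⟫| ≤ C := by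
    intro i s hs
    calc |⟪F0 (p0 s + Φ0 (WithLp.toLp 2 (fun i => ⟪p0 s, φ0 i⟫))), φ0 i⟫|
        ≤ ∑ k, |⟪F0 (p0 s + Φ0 (WithLp.toLp 2 (fun i => ⟪p0 s, φ0 i⟫))), φ0 k⟫| :=
          Finset.single_le_sum
            (f := fun k => |⟪F0 (p0 s + Φ0 (WithLp.toLp 2 (fun i => ⟪p0 s, φ0 i⟫))), φ0 k⟫|)
            (fun k _ => abs_nonneg _) (Finset.mem_univ i)
      _ ≤ C := hC2 s hs
  -- integrability of h
  have hhint : ∀ i, ∀ t ∈ Set.Icc (0:ℝ) T, IntervalIntegrable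
      (fun s => ⟪F0 (p0 s + Φ0 (WithLp.toLp 2 (fun i => ⟪p0 s, φ0 i⟫))), φ0 i⟫) volume 0 t := by
    intro i t ht
    rw [intervalIntegrable_iff_integrableOn_Icc_of_le ht.1]
    have hsub : Set.Icc (0:ℝ) t ⊆ Set.Icc 0 T := Set.Icc_subset_Icc le_rfl ht.2
    have hmeas : AEStronglyMeasurable
        (fun s => ⟪F0 (p0 s + Φ0 (WithLp.toLp 2 (fun i => ⟪p0 s, φ0 i⟫))), φ0 i⟫)
        (volume.restrict (Set.Icc 0 t)) := by
      have hm1 : AEStronglyMeasurable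
          (fun s => deriv (fun τ => ⟪p0 τ, φ0 i⟫) s + lam0 i * ⟪p0 s, φ0 i⟫)
          (volume.restrict (Set.Icc 0 t)) := by
        refine AEStronglyMeasurable.add ?_ ?_
        · exact (measurable_deriv _).aestronglyMeasurable.restrict
        · exact (((hbc i).mono hsub).aestronglyMeasurable measurableSet_Icc).const_mul _
      refine hm1.congr ?_
      refine (MeasureTheory.ae_restrict_iff' measurableSet_Icc).2
        (Filter.Eventually.of_forall fun s hs => ?_)
      show deriv (fun τ => ⟪p0 τ, φ0 i⟫) s + lam0 i * ⟪p0 s, φ0 i⟫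
        = ⟪F0 (p0 s + Φ0 (WithLp.toLp 2 (fun i => ⟪p0 s, φ0 i⟫))), φ0 i⟫
      rw [(hdb i s (hsub hs)).deriv]
      ring
    refine Integrable.mono' (integrable_const C) hmeas ?_
    refine (MeasureTheory.ae_restrict_iff' measurableSet_Icc).2
      (Filter.Eventually.of_forall fun s hs => ?_)
    rw [Real.norm_eq_abs]
    exact hhb i s (hsub hs)
  -- Duhamel formulas
  have hduha : ∀ i, ∀ t ∈ Set.Icc (0:ℝ) T, ⟪p t, φ i⟫
      = Real.exp (-(lam i) * t) * ⟪p 0, φ i⟫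
        + ∫ s in (0:ℝ)..t, Real.exp (-(lam i) * (t - s))
            * ⟪F (p s + Φ (WithLp.toLp 2 (fun i => ⟪p s, φ i⟫))), φ i⟫ := by
    intro i
    exact aux_duhamel (hda i) (fun t ht =>
      ((hgc i).mono (by rw [Set.uIcc_of_le ht.1]; exact Set.Icc_subset_Icc le_rfl ht.2)).intervalIntegrable)
  have hduhb : ∀ i, ∀ t ∈ Set.Icc (0:ℝ) T, ⟪p0 t, φ0 i⟫
      = Real.exp (-(lam0 i) * t) * ⟪p0 0, φ0 i⟫
        + ∫ s in (0:ℝ)..t, Real.exp (-(lam0 i) * (t - s))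
            * ⟪F0 (p0 s + Φ0 (WithLp.toLp 2 (fun i => ⟪p0 s, φ0 i⟫))), φ0 i⟫ := by
    intro i
    exact aux_duhamel (hdb i) (hhint i)
  -- key pointwise bound for the Euclidean distance of spectral coordinates
  have hψbound : ∀ s ∈ Set.Icc (0:ℝ) T,
      ‖Φ (WithLp.toLp 2 (fun i => ⟪p s, φ i⟫)) - Φ (WithLp.toLp 2 (fun i => ⟪p0 s, φ0 i⟫))‖
        ≤ ‖p s - j (p0 s)‖ + C * α := by
    intro s hs
    refine (hΦ' _ _).trans ?_
    set w : H := ∑ k, ⟪p0 s, φ0 k⟫ • (j (φ0 k) - φ k) with hw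
    have hjp0 : j (p0 s) = ∑ k, ⟪p0 s, φ0 k⟫ • j (φ0 k) := by
      conv_lhs => rw [aux_repr hφ0 (hp0span s)]
      rw [map_sum]
      simp only [_root_.map_smul]
    have hwφ : ∀ i, ⟪w, φ i⟫ = ⟪j (p0 s), φ i⟫ - ⟪p0 s, φ0 i⟫ := by
      intro i
      rw [hw, sum_inner]
      have hterm : ∀ k : Fin m, ⟪⟪p0 s, φ0 k⟫ • (j (φ0 k) - φ k), φ i⟫
          = ⟪p0 s, φ0 k⟫ * ⟪j (φ0 k), φ i⟫ - ⟪p0 s, φ0 k⟫ * ⟪φ k, φ i⟫ := by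
        intro k
        rw [real_inner_smul_left, inner_sub_left]
        ring
      rw [Finset.sum_congr rfl (fun k _ => hterm k), Finset.sum_sub_distrib]
      congr 1
      · rw [hjp0, sum_inner]
        exact Finset.sum_congr rfl fun k _ => (real_inner_smul_left _ _ _).symm
      · have h2 := hφ.inner_left_fintype (fun k => ⟪p0 s, φ0 k⟫) i
        calc ∑ k, ⟪p0 s, φ0 k⟫ * ⟪φ k, φ i⟫
            = ⟪∑ k, ⟪p0 s, φ0 k⟫ • φ k, φ i⟫ := by
              rw [sum_inner]
              exact Finset.sum_congr rfl fun k _ => (real_inner_smul_left _ _ _).symm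
          _ = ⟪p0 s, φ0 i⟫ := by simpa using h2
    have hz : ∀ i, ⟪(p s - j (p0 s)) + w, φ i⟫ = ⟪p s, φ i⟫ - ⟪p0 s, φ0 i⟫ := by
      intro i
      rw [inner_add_left, inner_sub_left, hwφ i]
      ring
    have hwnorm : ‖w‖ ≤ C * α := by
      rw [hw]
      refine (norm_sum_le _ _).trans ?_
      calc ∑ k, ‖⟪p0 s, φ0 k⟫ • (j (φ0 k) - φ k)‖ ≤ ∑ k, |⟪p0 s, φ0 k⟫| * α := by
            refine Finset.sum_le_sum fun k _ => ?_
            rw [norm_smul, Real.norm_eq_abs]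
            exact mul_le_mul_of_nonneg_left (hjφ k) (abs_nonneg _)
        _ = (∑ k, |⟪p0 s, φ0 k⟫|) * α := by rw [Finset.sum_mul]
        _ ≤ C * α := mul_le_mul_of_nonneg_right (hC1 s hs) hα
    rw [aux_euclid_norm hφ]
    have hsum : (∑ i, ((WithLp.toLp 2 (fun i => ⟪p s, φ i⟫) : EuclideanSpace ℝ (Fin m))
          - (WithLp.toLp 2 (fun i => ⟪p0 s, φ0 i⟫) : EuclideanSpace ℝ (Fin m))) i • φ i)
        = ∑ i, ⟪(p s - j (p0 s)) + w, φ i⟫ • φ i := by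
      refine Finset.sum_congr rfl fun i _ => ?_
      rw [hz i]
      rfl
    rw [hsum]
    refine (aux_bessel hφ _).trans ?_
    refine (norm_add_le _ _).trans ?_
    linarith
  -- bound on ‖F (P s) - j (v s)‖
  have hFP : ∀ s ∈ Set.Icc (0:ℝ) T,
      ‖F (p s + Φ (WithLp.toLp 2 (fun i => ⟪p s, φ i⟫)))
        - j (F0 (p0 s + Φ0 (WithLp.toLp 2 (fun i => ⟪p0 s, φ0 i⟫))))‖
        ≤ 2 * L * ‖p s - j (p0 s)‖ + (L * C * α + L * β + ρ) := by
    intro s hs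
    have h1 : ‖F (p s + Φ (WithLp.toLp 2 (fun i => ⟪p s, φ i⟫)))
        - F (j (p0 s) + Φ (WithLp.toLp 2 (fun i => ⟪p0 s, φ0 i⟫)))‖
        ≤ L * (2 * ‖p s - j (p0 s)‖ + C * α) := by
      refine (hF' _ _).trans (mul_le_mul_of_nonneg_left ?_ hL0)
      have harg : (p s + Φ (WithLp.toLp 2 (fun i => ⟪p s, φ i⟫)))
          - (j (p0 s) + Φ (WithLp.toLp 2 (fun i => ⟪p0 s, φ0 i⟫)))
          = (p s - j (p0 s)) + (Φ (WithLp.toLp 2 (fun i => ⟪p s, φ i⟫)) - Φ (WithLp.toLp 2 (fun i => ⟪p0 s, φ0 i⟫))) := by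
        abel
      rw [harg]
      refine (norm_add_le _ _).trans ?_
      have h2 := hψbound s hs
      linarith
    have h2 : ‖F (j (p0 s) + Φ (WithLp.toLp 2 (fun i => ⟪p0 s, φ0 i⟫)))
        - F (j (p0 s + Φ0 (WithLp.toLp 2 (fun i => ⟪p0 s, φ0 i⟫))))‖ ≤ L * β := by
      refine (hF' _ _).trans (mul_le_mul_of_nonneg_left ?_ hL0)
      have harg : (j (p0 s) + Φ (WithLp.toLp 2 (fun i => ⟪p0 s, φ0 i⟫)))
          - j (p0 s + Φ0 (WithLp.toLp 2 (fun i => ⟪p0 s, φ0 i⟫)))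
          = Φ (WithLp.toLp 2 (fun i => ⟪p0 s, φ0 i⟫)) - j (Φ0 (WithLp.toLp 2 (fun i => ⟪p0 s, φ0 i⟫))) := by
        rw [map_add]
        abel
      rw [harg]
      exact hβbound s hs
    have h3 := hρbound (p0 s + Φ0 (WithLp.toLp 2 (fun i => ⟪p0 s, φ0 i⟫)))
    have hsplit : F (p s + Φ (WithLp.toLp 2 (fun i => ⟪p s, φ i⟫)))
        - j (F0 (p0 s + Φ0 (WithLp.toLp 2 (fun i => ⟪p0 s, φ0 i⟫))))
        = (F (p s + Φ (WithLp.toLp 2 (fun i => ⟪p s, φ i⟫)))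
            - F (j (p0 s) + Φ (WithLp.toLp 2 (fun i => ⟪p0 s, φ0 i⟫))))
          + (F (j (p0 s) + Φ (WithLp.toLp 2 (fun i => ⟪p0 s, φ0 i⟫)))
            - F (j (p0 s + Φ0 (WithLp.toLp 2 (fun i => ⟪p0 s, φ0 i⟫)))))
          + (F (j (p0 s + Φ0 (WithLp.toLp 2 (fun i => ⟪p0 s, φ0 i⟫))))
            - j (F0 (p0 s + Φ0 (WithLp.toLp 2 (fun i => ⟪p0 s, φ0 i⟫))))) := by
      abel
    rw [hsplit]
    refine ((norm_add_le _ _).trans (add_le_add (norm_add_le _ _) le_rfl)).trans ?_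
    nlinarith
  -- the integral inequality
  set K : ℝ := C * (1 + 2 * T) * γ + C * α
      + (L * β + (L + 1 + Real.sqrt m) * C * α + ρ) / r with hKdef
  have hK0 : 0 ≤ K := by
    have h1 : (0:ℝ) ≤ C * (1 + 2 * T) * γ :=
      mul_nonneg (mul_nonneg hC (by linarith)) hγ
    have h2 : (0:ℝ) ≤ Real.sqrt m := Real.sqrt_nonneg _
    have h3 : (0:ℝ) ≤ L * β + (L + 1 + Real.sqrt m) * C * α + ρ := by
      have := mul_nonneg (mul_nonneg (by linarith : (0:ℝ) ≤ L + 1 + Real.sqrt m) hC) hα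
      nlinarith
    have h4 := div_nonneg h3 hr.le
    rw [hKdef]
    nlinarith
  have hmain : ∀ t ∈ Set.Icc (0:ℝ) T,
      ‖p t - j (p0 t)‖ ≤ K + 2 * L * ∫ s in (0:ℝ)..t, ‖p s - j (p0 s)‖ := by
    intro t ht
    have ht0 : (0:ℝ) ≤ t := ht.1
    have hsub : Set.Icc (0:ℝ) t ⊆ Set.Icc 0 T := Set.Icc_subset_Icc le_rfl ht.2
    have huIcc : Set.uIcc (0:ℝ) t ⊆ Set.Icc 0 T := by
      rw [Set.uIcc_of_le ht0]; exact hsub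
    set E : ℝ := L * C * α + L * β + ρ + Real.sqrt m * (C * α) with hEdef
    have hE0 : 0 ≤ E := by
      have h2 : (0:ℝ) ≤ Real.sqrt m := Real.sqrt_nonneg _
      have h3 : (0:ℝ) ≤ Real.sqrt m * (C * α) := mul_nonneg h2 hCα
      have h4 : (0:ℝ) ≤ L * C * α := mul_nonneg (mul_nonneg hL0 hC) hα
      have h5 : (0:ℝ) ≤ L * β := mul_nonneg hL0 hβ
      rw [hEdef]; linarith
    -- integrability package
    have hgint : ∀ i, IntervalIntegrable
        (fun s => ⟪F (p s + Φ (WithLp.toLp 2 (fun i => ⟪p s, φ i⟫))), φ i⟫) volume 0 t :=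
      fun i => ((hgc i).mono huIcc).intervalIntegrable
    have hhi : ∀ i, IntervalIntegrable (fun s => ⟪F0 (p0 s + Φ0 (WithLp.toLp 2 (fun i => ⟪p0 s, φ0 i⟫))), φ0 i⟫) volume 0 t :=
      fun i => hhint i t ht
    have hexpc : ∀ c : ℝ, Continuous (fun s : ℝ => Real.exp (-c * (t - s))) := fun c =>
      Real.continuous_exp.comp (continuous_const.mul (continuous_const.sub continuous_id))
    have int_eg : ∀ i, IntervalIntegrable
        (fun s => Real.exp (-(lam i) * (t - s)) * ⟪F (p s + Φ (WithLp.toLp 2 (fun i => ⟪p s, φ i⟫))), φ i⟫) volume 0 t :=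
      fun i => (hgint i).continuousOn_mul (hexpc (lam i)).continuousOn
    have int_e0h : ∀ i, IntervalIntegrable
        (fun s => Real.exp (-(lam0 i) * (t - s)) * ⟪F0 (p0 s + Φ0 (WithLp.toLp 2 (fun i => ⟪p0 s, φ0 i⟫))), φ0 i⟫) volume 0 t :=
      fun i => (hhi i).continuousOn_mul (hexpc (lam0 i)).continuousOn
    have int_eq : ∀ i, IntervalIntegrable
        (fun s => Real.exp (-(lam i) * (t - s)) * (⟪F (p s + Φ (WithLp.toLp 2 (fun i => ⟪p s, φ i⟫))), φ i⟫ - ⟪F0 (p0 s + Φ0 (WithLp.toLp 2 (fun i => ⟪p0 s, φ0 i⟫))), φ0 i⟫)) volume 0 t :=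
      fun i => ((hgint i).sub (hhi i)).continuousOn_mul (hexpc (lam i)).continuousOn
    have int_dh : ∀ i, IntervalIntegrable
        (fun s => (Real.exp (-(lam i) * (t - s)) - Real.exp (-(lam0 i) * (t - s))) * ⟪F0 (p0 s + Φ0 (WithLp.toLp 2 (fun i => ⟪p0 s, φ0 i⟫))), φ0 i⟫)
        volume 0 t :=
      fun i => (hhi i).continuousOn_mul
        (((hexpc (lam i)).sub (hexpc (lam0 i))).continuousOn)
    -- coefficient identity from the Duhamel formulas
    have hcoeff : ∀ i, ⟪p t, φ i⟫ - ⟪p0 t, φ0 i⟫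
        = (Real.exp (-(lam i) * t) - Real.exp (-(lam0 i) * t)) * ⟪p0 0, φ0 i⟫
          + (∫ s in (0:ℝ)..t, Real.exp (-(lam i) * (t - s)) * (⟪F (p s + Φ (WithLp.toLp 2 (fun i => ⟪p s, φ i⟫))), φ i⟫ - ⟪F0 (p0 s + Φ0 (WithLp.toLp 2 (fun i => ⟪p0 s, φ0 i⟫))), φ0 i⟫))
          + ∫ s in (0:ℝ)..t,
              (Real.exp (-(lam i) * (t - s)) - Real.exp (-(lam0 i) * (t - s))) * ⟪F0 (p0 s + Φ0 (WithLp.toLp 2 (fun i => ⟪p0 s, φ0 i⟫))), φ0 i⟫ := by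
      intro i
      have hI : (∫ s in (0:ℝ)..t, Real.exp (-(lam i) * (t - s)) * ⟪F (p s + Φ (WithLp.toLp 2 (fun i => ⟪p s, φ i⟫))), φ i⟫)
          - (∫ s in (0:ℝ)..t, Real.exp (-(lam0 i) * (t - s)) * ⟪F0 (p0 s + Φ0 (WithLp.toLp 2 (fun i => ⟪p0 s, φ0 i⟫))), φ0 i⟫)
          = (∫ s in (0:ℝ)..t, Real.exp (-(lam i) * (t - s)) * (⟪F (p s + Φ (WithLp.toLp 2 (fun i => ⟪p s, φ i⟫))), φ i⟫ - ⟪F0 (p0 s + Φ0 (WithLp.toLp 2 (fun i => ⟪p0 s, φ0 i⟫))), φ0 i⟫))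
            + ∫ s in (0:ℝ)..t,
                (Real.exp (-(lam i) * (t - s)) - Real.exp (-(lam0 i) * (t - s))) * ⟪F0 (p0 s + Φ0 (WithLp.toLp 2 (fun i => ⟪p0 s, φ0 i⟫))), φ0 i⟫ := by
        rw [← intervalIntegral.integral_sub (int_eg i) (int_e0h i),
          ← intervalIntegral.integral_add (int_eq i) (int_dh i)]
        exact intervalIntegral.integral_congr fun s _ => by ring
      rw [hduha i t ht, hduhb i t ht, hinit i]
      linarith [hI]
    -- splitting the difference
    have hsplit : ‖p t - j (p0 t)‖ ≤
        ‖∑ i, ((Real.exp (-(lam i) * t) - Real.exp (-(lam0 i) * t)) * ⟪p0 0, φ0 i⟫) • φ i‖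
        + ‖∑ i, (∫ s in (0:ℝ)..t, Real.exp (-(lam i) * (t - s)) * (⟪F (p s + Φ (WithLp.toLp 2 (fun i => ⟪p s, φ i⟫))), φ i⟫ - ⟪F0 (p0 s + Φ0 (WithLp.toLp 2 (fun i => ⟪p0 s, φ0 i⟫))), φ0 i⟫)) • φ i‖
        + ‖∑ i, (∫ s in (0:ℝ)..t,
            (Real.exp (-(lam i) * (t - s)) - Real.exp (-(lam0 i) * (t - s))) * ⟪F0 (p0 s + Φ0 (WithLp.toLp 2 (fun i => ⟪p0 s, φ0 i⟫))), φ0 i⟫) • φ i‖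
        + ‖∑ i, ⟪p0 t, φ0 i⟫ • (j (φ0 i) - φ i)‖ := by
      have hpe : p t = ∑ i, ⟪p t, φ i⟫ • φ i := aux_repr hφ (hpspan t)
      have hjp0 : j (p0 t) = ∑ i, ⟪p0 t, φ0 i⟫ • j (φ0 i) := by
        conv_lhs => rw [aux_repr hφ0 (hp0span t)]
        rw [map_sum]
        simp only [_root_.map_smul]
      have hkey : p t - j (p0 t)
          = (∑ i, ((Real.exp (-(lam i) * t) - Real.exp (-(lam0 i) * t)) * ⟪p0 0, φ0 i⟫) • φ i
            + ∑ i, (∫ s in (0:ℝ)..t, Real.exp (-(lam i) * (t - s)) * (⟪F (p s + Φ (WithLp.toLp 2 (fun i => ⟪p s, φ i⟫))), φ i⟫ - ⟪F0 (p0 s + Φ0 (WithLp.toLp 2 (fun i => ⟪p0 s, φ0 i⟫))), φ0 i⟫)) • φ i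
            + ∑ i, (∫ s in (0:ℝ)..t,
                (Real.exp (-(lam i) * (t - s)) - Real.exp (-(lam0 i) * (t - s))) * ⟪F0 (p0 s + Φ0 (WithLp.toLp 2 (fun i => ⟪p0 s, φ0 i⟫))), φ0 i⟫) • φ i)
            - ∑ i, ⟪p0 t, φ0 i⟫ • (j (φ0 i) - φ i) := by
        conv_lhs => rw [hpe, hjp0]
        rw [← Finset.sum_sub_distrib]
        have hterm : ∀ i : Fin m, ⟪p t, φ i⟫ • φ i - ⟪p0 t, φ0 i⟫ • j (φ0 i)
            = (((Real.exp (-(lam i) * t) - Real.exp (-(lam0 i) * t)) * ⟪p0 0, φ0 i⟫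
                + (∫ s in (0:ℝ)..t, Real.exp (-(lam i) * (t - s)) * (⟪F (p s + Φ (WithLp.toLp 2 (fun i => ⟪p s, φ i⟫))), φ i⟫ - ⟪F0 (p0 s + Φ0 (WithLp.toLp 2 (fun i => ⟪p0 s, φ0 i⟫))), φ0 i⟫))
                + ∫ s in (0:ℝ)..t,
                    (Real.exp (-(lam i) * (t - s)) - Real.exp (-(lam0 i) * (t - s))) * ⟪F0 (p0 s + Φ0 (WithLp.toLp 2 (fun i => ⟪p0 s, φ0 i⟫))), φ0 i⟫) • φ i)
              - ⟪p0 t, φ0 i⟫ • (j (φ0 i) - φ i) := by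
          intro i
          rw [← hcoeff i, sub_smul, smul_sub]
          abel
        rw [Finset.sum_congr rfl (fun i _ => hterm i), Finset.sum_sub_distrib]
        congr 1
        rw [Finset.sum_congr rfl (fun (i : Fin m) (_ : i ∈ Finset.univ) => by
          rw [add_smul, add_smul] :
            ∀ i ∈ Finset.univ, _ = _),
          Finset.sum_add_distrib, Finset.sum_add_distrib]
      rw [hkey]
      refine (norm_sub_le _ _).trans ?_
      have := norm_add₃_le
        (a := ∑ i, ((Real.exp (-(lam i) * t) - Real.exp (-(lam0 i) * t)) * ⟪p0 0, φ0 i⟫) • φ i)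
        (b := ∑ i, (∫ s in (0:ℝ)..t, Real.exp (-(lam i) * (t - s)) * (⟪F (p s + Φ (WithLp.toLp 2 (fun i => ⟪p s, φ i⟫))), φ i⟫ - ⟪F0 (p0 s + Φ0 (WithLp.toLp 2 (fun i => ⟪p0 s, φ0 i⟫))), φ0 i⟫)) • φ i)
        (c := ∑ i, (∫ s in (0:ℝ)..t,
            (Real.exp (-(lam i) * (t - s)) - Real.exp (-(lam0 i) * (t - s))) * ⟪F0 (p0 s + Φ0 (WithLp.toLp 2 (fun i => ⟪p0 s, φ0 i⟫))), φ0 i⟫) • φ i)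
      linarith
    -- S1 bound
    have hS1 : ‖∑ i, ((Real.exp (-(lam i) * t) - Real.exp (-(lam0 i) * t)) * ⟪p0 0, φ0 i⟫) • φ i‖
        ≤ C * γ := by
      refine (aux_norm_le_l1 hφ _).trans ?_
      have hper : ∀ i : Fin m,
          |(Real.exp (-(lam i) * t) - Real.exp (-(lam0 i) * t)) * ⟪p0 0, φ0 i⟫|
          ≤ γ * |⟪p0 0, φ0 i⟫| := by
        intro i
        rw [abs_mul]
        exact mul_le_mul_of_nonneg_right
          (hγbound i t ⟨by linarith [ht.1, hT.le], ht.2⟩) (abs_nonneg _)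
      refine (Finset.sum_le_sum fun i _ => hper i).trans ?_
      rw [← Finset.mul_sum]
      calc γ * ∑ i, |⟪p0 0, φ0 i⟫| ≤ γ * C :=
            mul_le_mul_of_nonneg_left (hC1 0 ⟨le_rfl, hT.le⟩) hγ
        _ = C * γ := mul_comm _ _
    -- S3 bound
    have hS3 : ‖∑ i, (∫ s in (0:ℝ)..t,
          (Real.exp (-(lam i) * (t - s)) - Real.exp (-(lam0 i) * (t - s))) * ⟪F0 (p0 s + Φ0 (WithLp.toLp 2 (fun i => ⟪p0 s, φ0 i⟫))), φ0 i⟫) • φ i‖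
        ≤ C * T * γ := by
      refine (aux_norm_le_l1 hφ _).trans ?_
      have hper : ∀ i : Fin m, |∫ s in (0:ℝ)..t,
          (Real.exp (-(lam i) * (t - s)) - Real.exp (-(lam0 i) * (t - s))) * ⟪F0 (p0 s + Φ0 (WithLp.toLp 2 (fun i => ⟪p0 s, φ0 i⟫))), φ0 i⟫|
          ≤ ∫ s in (0:ℝ)..t, γ * |⟪F0 (p0 s + Φ0 (WithLp.toLp 2 (fun i => ⟪p0 s, φ0 i⟫))), φ0 i⟫| := by
        intro i
        refine (intervalIntegral.abs_integral_le_integral_abs ht0).trans ?_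
        refine intervalIntegral.integral_mono_on ht0 (int_dh i).abs
          ((hhi i).abs.const_mul γ) ?_
        intro s hss
        rw [abs_mul]
        refine mul_le_mul_of_nonneg_right ?_ (abs_nonneg _)
        exact hγbound i (t - s) ⟨by linarith [hss.2, ht.2, hT.le], by linarith [hss.1, ht.2]⟩
      refine (Finset.sum_le_sum fun i _ => hper i).trans ?_
      have hsum_int : IntervalIntegrable (fun s => ∑ i, γ * |⟪F0 (p0 s + Φ0 (WithLp.toLp 2 (fun i => ⟪p0 s, φ0 i⟫))), φ0 i⟫|) volume 0 t := by
        have h1 := IntervalIntegrable.sum (μ := volume) Finset.univ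
          (f := fun (i : Fin m) => fun s => γ * |⟪F0 (p0 s + Φ0 (WithLp.toLp 2 (fun i => ⟪p0 s, φ0 i⟫))), φ0 i⟫|)
          (fun i _ => (hhi i).abs.const_mul γ)
        have heq : (∑ i : Fin m, fun s => γ * |⟪F0 (p0 s + Φ0 (WithLp.toLp 2 (fun i => ⟪p0 s, φ0 i⟫))), φ0 i⟫|) = fun s => ∑ i, γ * |⟪F0 (p0 s + Φ0 (WithLp.toLp 2 (fun i => ⟪p0 s, φ0 i⟫))), φ0 i⟫| := by
          funext s
          simp
        rwa [heq] at h1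
      rw [← intervalIntegral.integral_finset_sum (fun i (_ : i ∈ Finset.univ) =>
        (hhi i).abs.const_mul γ)]
      have hmono : (∫ s in (0:ℝ)..t, ∑ i, γ * |⟪F0 (p0 s + Φ0 (WithLp.toLp 2 (fun i => ⟪p0 s, φ0 i⟫))), φ0 i⟫|) ≤ ∫ _s in (0:ℝ)..t, γ * C := by
        refine intervalIntegral.integral_mono_on ht0 hsum_int intervalIntegrable_const ?_
        intro s hss
        rw [← Finset.mul_sum]
        exact mul_le_mul_of_nonneg_left (hC2 s (hsub hss)) hγ
      refine hmono.trans ?_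
      rw [intervalIntegral.integral_const, smul_eq_mul, sub_zero]
      nlinarith [mul_le_mul_of_nonneg_right ht.2 (mul_nonneg hγ hC)]
    -- S4 bound
    have hS4 : ‖∑ i, ⟪p0 t, φ0 i⟫ • (j (φ0 i) - φ i)‖ ≤ C * α := by
      refine (norm_sum_le _ _).trans ?_
      calc ∑ i, ‖⟪p0 t, φ0 i⟫ • (j (φ0 i) - φ i)‖ ≤ ∑ i, |⟪p0 t, φ0 i⟫| * α := by
            refine Finset.sum_le_sum fun i _ => ?_
            rw [norm_smul, Real.norm_eq_abs]
            exact mul_le_mul_of_nonneg_left (hjφ i) (abs_nonneg _)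
        _ = (∑ i, |⟪p0 t, φ0 i⟫|) * α := by rw [Finset.sum_mul]
        _ ≤ C * α := mul_le_mul_of_nonneg_right (hC1 t ht) hα
    -- S2 bound
    have hS2 : ‖∑ i, (∫ s in (0:ℝ)..t, Real.exp (-(lam i) * (t - s)) * (⟪F (p s + Φ (WithLp.toLp 2 (fun i => ⟪p s, φ i⟫))), φ i⟫ - ⟪F0 (p0 s + Φ0 (WithLp.toLp 2 (fun i => ⟪p0 s, φ0 i⟫))), φ0 i⟫)) • φ i‖
        ≤ E / r + 2 * L * ∫ s in (0:ℝ)..t, ‖p s - j (p0 s)‖ := by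
      have hswap : (∑ i, (∫ s in (0:ℝ)..t, Real.exp (-(lam i) * (t - s)) * (⟪F (p s + Φ (WithLp.toLp 2 (fun i => ⟪p s, φ i⟫))), φ i⟫ - ⟪F0 (p0 s + Φ0 (WithLp.toLp 2 (fun i => ⟪p0 s, φ0 i⟫))), φ0 i⟫)) • φ i)
          = ∫ s in (0:ℝ)..t, ∑ i, (Real.exp (-(lam i) * (t - s)) * (⟪F (p s + Φ (WithLp.toLp 2 (fun i => ⟪p s, φ i⟫))), φ i⟫ - ⟪F0 (p0 s + Φ0 (WithLp.toLp 2 (fun i => ⟪p0 s, φ0 i⟫))), φ0 i⟫)) • φ i := by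
        rw [intervalIntegral.integral_finset_sum (fun i (_ : i ∈ Finset.univ) =>
          aux_smul_const (int_eq i) (φ i))]
        exact Finset.sum_congr rfl fun i _ => (intervalIntegral.integral_smul_const _ _).symm
      rw [hswap]
      have hintu : IntervalIntegrable
          (fun s => ∑ i, (Real.exp (-(lam i) * (t - s)) * (⟪F (p s + Φ (WithLp.toLp 2 (fun i => ⟪p s, φ i⟫))), φ i⟫ - ⟪F0 (p0 s + Φ0 (WithLp.toLp 2 (fun i => ⟪p0 s, φ0 i⟫))), φ0 i⟫)) • φ i) volume 0 t := by
        have h1 := IntervalIntegrable.sum (μ := volume) Finset.univ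
          (f := fun (i : Fin m) => fun s => (Real.exp (-(lam i) * (t - s)) * (⟪F (p s + Φ (WithLp.toLp 2 (fun i => ⟪p s, φ i⟫))), φ i⟫ - ⟪F0 (p0 s + Φ0 (WithLp.toLp 2 (fun i => ⟪p0 s, φ0 i⟫))), φ0 i⟫)) • φ i)
          (fun i _ => aux_smul_const (int_eq i) (φ i))
        have heq : (∑ i : Fin m, fun s => (Real.exp (-(lam i) * (t - s)) * (⟪F (p s + Φ (WithLp.toLp 2 (fun i => ⟪p s, φ i⟫))), φ i⟫ - ⟪F0 (p0 s + Φ0 (WithLp.toLp 2 (fun i => ⟪p0 s, φ0 i⟫))), φ0 i⟫)) • φ i)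
            = fun s => ∑ i, (Real.exp (-(lam i) * (t - s)) * (⟪F (p s + Φ (WithLp.toLp 2 (fun i => ⟪p s, φ i⟫))), φ i⟫ - ⟪F0 (p0 s + Φ0 (WithLp.toLp 2 (fun i => ⟪p0 s, φ0 i⟫))), φ0 i⟫)) • φ i := by
          funext s
          simp
        rwa [heq] at h1
      have hfc' : ContinuousOn (fun s => ‖p s - j (p0 s)‖) (Set.uIcc 0 t) := hfc.mono huIcc
      have hrhs_int : IntervalIntegrable
          (fun s => Real.exp (-r * (t - s)) * (2 * L * ‖p s - j (p0 s)‖ + E)) volume 0 t :=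
        (((hexpc r).continuousOn).mul
          ((continuousOn_const.mul hfc').add continuousOn_const)).intervalIntegrable
      have hrhs2_int : IntervalIntegrable
          (fun s => 2 * L * ‖p s - j (p0 s)‖ + E * Real.exp (-r * (t - s))) volume 0 t :=
        ((continuousOn_const.mul hfc').add
          (continuousOn_const.mul (hexpc r).continuousOn)).intervalIntegrable
      have hptw : ∀ s ∈ Set.Icc (0:ℝ) t,
          ‖∑ i, (Real.exp (-(lam i) * (t - s)) * (⟪F (p s + Φ (WithLp.toLp 2 (fun i => ⟪p s, φ i⟫))), φ i⟫ - ⟪F0 (p0 s + Φ0 (WithLp.toLp 2 (fun i => ⟪p0 s, φ0 i⟫))), φ0 i⟫)) • φ i‖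
          ≤ Real.exp (-r * (t - s)) * (2 * L * ‖p s - j (p0 s)‖ + E) := by
        intro s hss
        have hsT : s ∈ Set.Icc (0:ℝ) T := hsub hss
        have hts0 : 0 ≤ t - s := by linarith [hss.2]
        have hcmp : ∀ i, |Real.exp (-(lam i) * (t - s)) * (⟪F (p s + Φ (WithLp.toLp 2 (fun i => ⟪p s, φ i⟫))), φ i⟫ - ⟪F0 (p0 s + Φ0 (WithLp.toLp 2 (fun i => ⟪p0 s, φ0 i⟫))), φ0 i⟫)|
            ≤ |Real.exp (-r * (t - s)) * (⟪F (p s + Φ (WithLp.toLp 2 (fun i => ⟪p s, φ i⟫))), φ i⟫ - ⟪F0 (p0 s + Φ0 (WithLp.toLp 2 (fun i => ⟪p0 s, φ0 i⟫))), φ0 i⟫)| := by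
          intro i
          rw [abs_mul, abs_mul]
          refine mul_le_mul_of_nonneg_right ?_ (abs_nonneg _)
          rw [abs_of_pos (Real.exp_pos _), abs_of_pos (Real.exp_pos _)]
          exact Real.exp_le_exp.2 (by nlinarith [hrlam i])
        refine (aux_norm_le_of_coeff_le hφ hcmp).trans ?_
        have hpull : (∑ i, (Real.exp (-r * (t - s)) * (⟪F (p s + Φ (WithLp.toLp 2 (fun i => ⟪p s, φ i⟫))), φ i⟫ - ⟪F0 (p0 s + Φ0 (WithLp.toLp 2 (fun i => ⟪p0 s, φ0 i⟫))), φ0 i⟫)) • φ i)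
            = Real.exp (-r * (t - s)) • ∑ i, (⟪F (p s + Φ (WithLp.toLp 2 (fun i => ⟪p s, φ i⟫))), φ i⟫ - ⟪F0 (p0 s + Φ0 (WithLp.toLp 2 (fun i => ⟪p0 s, φ0 i⟫))), φ0 i⟫) • φ i := by
          rw [Finset.smul_sum]
          exact Finset.sum_congr rfl fun i _ => by rw [smul_smul]
        rw [hpull, norm_smul, Real.norm_eq_abs, abs_of_pos (Real.exp_pos _)]
        refine mul_le_mul_of_nonneg_left ?_ (Real.exp_pos _).le
        have hq : ∀ i, ⟪F (p s + Φ (WithLp.toLp 2 (fun i => ⟪p s, φ i⟫))), φ i⟫ - ⟪F0 (p0 s + Φ0 (WithLp.toLp 2 (fun i => ⟪p0 s, φ0 i⟫))), φ0 i⟫ = ⟪F (p s + Φ (WithLp.toLp 2 (fun i => ⟪p s, φ i⟫))) - j (F0 (p0 s + Φ0 (WithLp.toLp 2 (fun i => ⟪p0 s, φ0 i⟫)))), φ i⟫ + ⟪F0 (p0 s + Φ0 (WithLp.toLp 2 (fun i => ⟪p0 s, φ0 i⟫))), ContinuousLinearMap.adjoint j (φ i) - φ0 i⟫ := by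
          intro i
          rw [inner_sub_left, inner_sub_right, ContinuousLinearMap.adjoint_inner_right]
          ring
        rw [Finset.sum_congr rfl (fun (i : Fin m) (_ : i ∈ Finset.univ) => by
          rw [hq i, add_smul] : ∀ i ∈ Finset.univ, _ = _), Finset.sum_add_distrib]
        refine (norm_add_le _ _).trans ?_
        have hb1 := aux_bessel hφ (F (p s + Φ (WithLp.toLp 2 (fun i => ⟪p s, φ i⟫))) - j (F0 (p0 s + Φ0 (WithLp.toLp 2 (fun i => ⟪p0 s, φ0 i⟫)))))
        have hb2 : ‖∑ i, (⟪F0 (p0 s + Φ0 (WithLp.toLp 2 (fun i => ⟪p0 s, φ0 i⟫))), ContinuousLinearMap.adjoint j (φ i) - φ0 i⟫) • φ i‖ ≤ Real.sqrt m * (C * α) := by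
          have hsq := aux_norm_sq hφ (fun i => ⟪F0 (p0 s + Φ0 (WithLp.toLp 2 (fun i => ⟪p0 s, φ0 i⟫))), ContinuousLinearMap.adjoint j (φ i) - φ0 i⟫)
          have hyb : ∀ i, |⟪F0 (p0 s + Φ0 (WithLp.toLp 2 (fun i => ⟪p0 s, φ0 i⟫))), ContinuousLinearMap.adjoint j (φ i) - φ0 i⟫| ≤ C * α := fun i =>
            (abs_real_inner_le_norm _ _).trans
              (mul_le_mul (hC3 s hsT) (hjadj i) (norm_nonneg _) hC)
          have hsum2 : ∑ i, (⟪F0 (p0 s + Φ0 (WithLp.toLp 2 (fun i => ⟪p0 s, φ0 i⟫))), ContinuousLinearMap.adjoint j (φ i) - φ0 i⟫) ^ 2 ≤ (m : ℝ) * (C * α) ^ 2 := by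
            calc ∑ i, (⟪F0 (p0 s + Φ0 (WithLp.toLp 2 (fun i => ⟪p0 s, φ0 i⟫))), ContinuousLinearMap.adjoint j (φ i) - φ0 i⟫) ^ 2 ≤ ∑ _i : Fin m, (C * α) ^ 2 :=
                  Finset.sum_le_sum fun i _ => by
                    nlinarith [hyb i, abs_nonneg (⟪F0 (p0 s + Φ0 (WithLp.toLp 2 (fun i => ⟪p0 s, φ0 i⟫))), ContinuousLinearMap.adjoint j (φ i) - φ0 i⟫), sq_abs (⟪F0 (p0 s + Φ0 (WithLp.toLp 2 (fun i => ⟪p0 s, φ0 i⟫))), ContinuousLinearMap.adjoint j (φ i) - φ0 i⟫)]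
              _ = (m : ℝ) * (C * α) ^ 2 := by
                  rw [Finset.sum_const, Finset.card_univ, Fintype.card_fin, nsmul_eq_mul]
          calc ‖∑ i, (⟪F0 (p0 s + Φ0 (WithLp.toLp 2 (fun i => ⟪p0 s, φ0 i⟫))), ContinuousLinearMap.adjoint j (φ i) - φ0 i⟫) • φ i‖ = Real.sqrt (‖∑ i, (⟪F0 (p0 s + Φ0 (WithLp.toLp 2 (fun i => ⟪p0 s, φ0 i⟫))), ContinuousLinearMap.adjoint j (φ i) - φ0 i⟫) • φ i‖ ^ 2) :=
                (Real.sqrt_sq (norm_nonneg _)).symm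
            _ ≤ Real.sqrt ((m : ℝ) * (C * α) ^ 2) :=
                Real.sqrt_le_sqrt (by rw [hsq]; exact hsum2)
            _ = Real.sqrt m * (C * α) := by
                rw [Real.sqrt_mul (Nat.cast_nonneg m) ((C * α) ^ 2), Real.sqrt_sq hCα]
        have hb3 := hFP s hsT
        rw [hEdef]
        linarith
      calc ‖∫ s in (0:ℝ)..t, ∑ i, (Real.exp (-(lam i) * (t - s)) * (⟪F (p s + Φ (WithLp.toLp 2 (fun i => ⟪p s, φ i⟫))), φ i⟫ - ⟪F0 (p0 s + Φ0 (WithLp.toLp 2 (fun i => ⟪p0 s, φ0 i⟫))), φ0 i⟫)) • φ i‖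
          ≤ ∫ s in (0:ℝ)..t, ‖∑ i, (Real.exp (-(lam i) * (t - s)) * (⟪F (p s + Φ (WithLp.toLp 2 (fun i => ⟪p s, φ i⟫))), φ i⟫ - ⟪F0 (p0 s + Φ0 (WithLp.toLp 2 (fun i => ⟪p0 s, φ0 i⟫))), φ0 i⟫)) • φ i‖ :=
            intervalIntegral.norm_integral_le_integral_norm ht0
        _ ≤ ∫ s in (0:ℝ)..t, Real.exp (-r * (t - s)) * (2 * L * ‖p s - j (p0 s)‖ + E) :=
            intervalIntegral.integral_mono_on ht0 hintu.norm hrhs_int hptw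
        _ ≤ ∫ s in (0:ℝ)..t, (2 * L * ‖p s - j (p0 s)‖ + E * Real.exp (-r * (t - s))) := by
            refine intervalIntegral.integral_mono_on ht0 hrhs_int hrhs2_int ?_
            intro s hss
            have he1 : Real.exp (-r * (t - s)) ≤ 1 := by
              rw [Real.exp_le_one_iff]
              nlinarith [hss.2, hr.le]
            have hf0 : 0 ≤ 2 * L * ‖p s - j (p0 s)‖ := by positivity
            have hexp0 := (Real.exp_pos (-r * (t - s))).le
            nlinarith
        _ = 2 * L * (∫ s in (0:ℝ)..t, ‖p s - j (p0 s)‖)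
            + E * ((1 - Real.exp (-r * t)) / r) := by
            rw [intervalIntegral.integral_add (f := fun s => 2 * L * ‖p s - j (p0 s)‖)
                (g := fun s => E * Real.exp (-r * (t - s)))
                ((continuousOn_const.mul hfc').intervalIntegrable)
                ((continuousOn_const.mul (hexpc r).continuousOn).intervalIntegrable),
              intervalIntegral.integral_const_mul, intervalIntegral.integral_const_mul,
              aux_exp_integral hr]
        _ ≤ E / r + 2 * L * ∫ s in (0:ℝ)..t, ‖p s - j (p0 s)‖ := by
            have h1 : (1 - Real.exp (-r * t)) / r ≤ 1 / r := by
              rw [div_eq_mul_inv, div_eq_mul_inv]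
              exact mul_le_mul_of_nonneg_right
                (by nlinarith [(Real.exp_pos (-r * t)).le]) (inv_nonneg.2 hr.le)
            have h2 := mul_le_mul_of_nonneg_left h1 hE0
            rw [mul_one_div] at h2
            linarith
    have hfin := hsplit
    have hringN : L * β + (L + 1 + Real.sqrt m) * C * α + ρ = E + C * α := by
      rw [hEdef]; ring
    have hKge : C * γ + C * T * γ + C * α + E / r
        ≤ C * (1 + 2 * T) * γ + C * α + (L * β + (L + 1 + Real.sqrt m) * C * α + ρ) / r := by
      have h1 : C * γ + C * T * γ ≤ C * (1 + 2 * T) * γ := by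
        have hexp : C * (1 + 2 * T) * γ = C * γ + 2 * (C * T * γ) := by ring
        have := mul_nonneg (mul_nonneg hC hT.le) hγ
        linarith
      have h2 : E / r ≤ (L * β + (L + 1 + Real.sqrt m) * C * α + ρ) / r := by
        rw [hringN, div_eq_mul_inv, div_eq_mul_inv]
        exact mul_le_mul_of_nonneg_right (by linarith) (inv_nonneg.2 hr.le)
      linarith
    rw [hKdef]
    linarith [hS1, hS2, hS3, hS4, hfin, hKge]
  -- Gronwall
  have := aux_gronwall hK0 hL hT.le hfc (fun s _ => norm_nonneg _) hmain
  intro t ht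
  exact this t ht
end

section
/- For every ε > 0, every T > 0 and every bounded set B ⊆ H_0 there exists K ∈ ℕ such that for all n ≥ K and all u ∈ B: ∫_0^T ‖ e^{−A_n t} Q_m^n (j_n u) − j_n ( e^{−A_0 t} Q_m^0 u ) ‖ dt < ε. (This is the paper's Lemma 3.4: the linear semigroups on the orthogonal complements of the first m modes become uniformly close along the sequence, in integrated form on [0,T], uniformly over bounded sets.) -/
open MeasureTheory Filter RealInnerProductSpace Finset Real

/-! Split both semigroups at a mode `N` with `λ_N^0` large. Beyond `N`, Bessel's inequality and
monotonicity of the eigenvalues bound each semigroup by `e^{-λ_N t}` times the norm of its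
argument, which integrates over `[0, T]` to at most `1 / λ_N`: these tails are small uniformly
in `n` and `u ∈ B`. The finitely many modes below `N` converge one by one, with an error linear
in `‖u‖`, by the convergence of `λ_i^n`, of `j_n φ_i^0` and of `j_n^* φ_i^n`. -/

section Orthonormal

variable {ι E : Type*} [NormedAddCommGroup E] [InnerProductSpace ℝ E] {v : ι → E} {c : ι → ℝ}
  {a : ℝ}

lemma norm_sq_le_of_abs_le_mul_abs_inner (w : E) (hc : ∀ i, |c i| ≤ a * |⟪w, v i⟫|) (i : ι) :
    ‖c i‖ ^ 2 ≤ a ^ 2 * ‖⟪v i, w⟫‖ ^ 2 := by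
  rw [Real.norm_eq_abs, Real.norm_eq_abs, real_inner_comm, ← mul_pow]
  exact pow_le_pow_left₀ (abs_nonneg _) (hc i) 2

lemma Orthonormal.norm_sum_smul_le (hv : Orthonormal ℝ v) (w : E) (ha : 0 ≤ a)
    (hc : ∀ i, |c i| ≤ a * |⟪w, v i⟫|) (s : Finset ι) :
    ‖∑ i ∈ s, c i • v i‖ ≤ a * ‖w‖ := by
  refine (pow_le_pow_iff_left₀ (norm_nonneg _) (by positivity) two_ne_zero).1 ?_
  calc ‖∑ i ∈ s, c i • v i‖ ^ 2 = ∑ i ∈ s, ‖c i‖ ^ 2 := by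
        simpa [LinearIsometry.toSpanSingleton_apply] using hv.orthogonalFamily.norm_sum c s
    _ ≤ a ^ 2 * ∑ i ∈ s, ‖⟪v i, w⟫‖ ^ 2 := by
        rw [mul_sum]; exact sum_le_sum fun i _ => norm_sq_le_of_abs_le_mul_abs_inner w hc i
    _ ≤ (a * ‖w‖) ^ 2 := by rw [mul_pow]; gcongr; exact hv.sum_inner_products_le w

lemma Orthonormal.summable_smul_of_abs_le [CompleteSpace E] (hv : Orthonormal ℝ v) (w : E)
    (hc : ∀ i, |c i| ≤ a * |⟪w, v i⟫|) : Summable fun i => c i • v i := by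
  have hsq : Summable fun i => ‖c i‖ ^ 2 :=
    .of_nonneg_of_le (fun i => sq_nonneg _) (norm_sq_le_of_abs_le_mul_abs_inner w hc)
      ((hv.inner_products_summable w).mul_left (a ^ 2))
  simpa [LinearIsometry.toSpanSingleton_apply] using
    (hv.orthogonalFamily.summable_iff_norm_sq_summable c).2 hsq

lemma Orthonormal.norm_tsum_smul_le [CompleteSpace E] (hv : Orthonormal ℝ v) (w : E)
    (ha : 0 ≤ a) (hc : ∀ i, |c i| ≤ a * |⟪w, v i⟫|) : ‖∑' i, c i • v i‖ ≤ a * ‖w‖ :=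
  le_of_tendsto' (hv.summable_smul_of_abs_le w hc).hasSum.norm (hv.norm_sum_smul_le w ha hc)

lemma Orthonormal.norm_tsum_smul_sub_sum_range_le [CompleteSpace E] {v : ℕ → E} {c : ℕ → ℝ}
    (hv : Orthonormal ℝ v) (w : E) (ha : 0 ≤ a) {N : ℕ}
    (hc : ∀ i, N ≤ i → |c i| ≤ a * |⟪w, v i⟫|) :
    ‖∑' i, c i • v i - ∑ i ∈ range N, c i • v i‖ ≤ a * ‖w‖ := by
  have hvN : Orthonormal ℝ fun i => v (i + N) := hv.comp _ (add_left_injective N)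
  have hcN : ∀ i, |c (i + N)| ≤ a * |⟪w, v (i + N)⟫| := fun i => hc _ (Nat.le_add_left N i)
  have hsum : Summable fun i => c i • v i :=
    (summable_nat_add_iff N).1 (hvN.summable_smul_of_abs_le w hcN)
  rw [← hsum.sum_add_tsum_nat_add N, add_sub_cancel_left]
  exact hvN.norm_tsum_smul_le w ha hcN

end Orthonormal

lemma Real.abs_exp_neg_sub_exp_neg_le {x y : ℝ} (hx : 0 ≤ x) (hy : 0 ≤ y) :
    |exp (-x) - exp (-y)| ≤ |x - y| := by
  wlog h : x ≤ y generalizing x y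
  · rw [abs_sub_comm, abs_sub_comm x]
    exact this hy hx (le_of_not_ge h)
  rw [abs_of_nonneg (sub_nonneg.2 (exp_le_exp.2 (neg_le_neg h))), abs_sub_comm,
    abs_of_nonneg (sub_nonneg.2 h)]
  have hx1 : exp (-x) ≤ 1 := exp_le_one_iff.2 (neg_nonpos.2 hx)
  have hyx : 1 - (y - x) ≤ exp (-(y - x)) := one_sub_le_exp_neg _
  have hsplit : exp (-y) = exp (-x) * exp (-(y - x)) := by rw [← exp_add]; ring_nf
  nlinarith [exp_pos (-x), mul_nonneg (sub_nonneg.2 hx1) (sub_nonneg.2 h)]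

lemma integral_exp_neg_mul_le {l T : ℝ} (hl : 0 < l) (hT : 0 ≤ T) :
    ∫ t in (0:ℝ)..T, exp (-l * t) ≤ 1 / l := by
  rw [intervalIntegral.integral_of_le hT]
  calc ∫ t in Set.Ioc 0 T, exp (-l * t) ≤ ∫ t in Set.Ioi 0, exp (-l * t) :=
        setIntegral_mono_set (exp_neg_integrableOn_Ioi 0 hl)
          (ae_of_all _ fun _ => (exp_pos _).le) Set.Ioc_subset_Ioi_self.eventuallyLE
    _ = 1 / l := by rw [integral_exp_mul_Ioi (neg_neg_of_pos hl)]; field_simp; simp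

section TailSemigroup

variable {E F : Type*} [NormedAddCommGroup E] [InnerProductSpace ℝ E] [CompleteSpace E]
  [NormedAddCommGroup F] [InnerProductSpace ℝ F] [CompleteSpace F]

/-- `e^{-A t} Q_m w` for the operator `A` with eigenpairs `(lam i, v i)`. Modes are indexed
from `0`, so `Q_m` removes the modes `i < m`. -/
noncomputable def tailSemigroup (v : ℕ → E) (lam : ℕ → ℝ) (m : ℕ) (t : ℝ) (w : E) : E :=
  ∑' i, if m ≤ i then (exp (-(lam i) * t) * ⟪w, v i⟫) • v i else 0

/-- How far `j` is from intertwining the first `N` modes `(lam, φ)` with `(lam', ψ)`. -/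
noncomputable def modeDefect (j : E →L[ℝ] F) (φ : ℕ → E) (ψ : ℕ → F) (lam lam' : ℕ → ℝ)
    (c : ℝ) (N : ℕ) : ℝ :=
  ∑ i ∈ range N, (c * |lam' i - lam i| + ‖ContinuousLinearMap.adjoint j (ψ i) - φ i‖ +
    ‖j (φ i) - ψ i‖)

lemma modeDefect_nonneg (j : E →L[ℝ] F) (φ : ℕ → E) (ψ : ℕ → F) (lam lam' : ℕ → ℝ) {c : ℝ}
    (hc : 0 ≤ c) (N : ℕ) : 0 ≤ modeDefect j φ ψ lam lam' c N := by
  unfold modeDefect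
  positivity

lemma norm_tailSemigroup_sub_sum_le {v : ℕ → E} {lam : ℕ → ℝ} {t : ℝ} (hv : Orthonormal ℝ v)
    (hlam : Monotone lam) (ht : 0 ≤ t) (m : ℕ) (w : E) (N : ℕ) :
    ‖tailSemigroup v lam m t w -
        ∑ i ∈ range N, if m ≤ i then (exp (-(lam i) * t) * ⟪w, v i⟫) • v i else 0‖
      ≤ exp (-(lam N) * t) * ‖w‖ := by
  set c : ℕ → ℝ := fun i => if m ≤ i then exp (-(lam i) * t) * ⟪w, v i⟫ else 0
  have hterm : ∀ i, (if m ≤ i then (exp (-(lam i) * t) * ⟪w, v i⟫) • v i else 0) = c i • v i :=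
    fun i => by split_ifs with hmi <;> simp [c, hmi]
  simp only [tailSemigroup, hterm]
  refine hv.norm_tsum_smul_sub_sum_range_le w (exp_pos _).le fun i hi => ?_
  by_cases hmi : m ≤ i
  · simp only [c, if_pos hmi, abs_mul, abs_exp]
    gcongr
    exact hlam hi
  · simp only [c, if_neg hmi, abs_zero]
    positivity

lemma norm_exp_smul_sub_map_exp_smul_le (j : E →L[ℝ] F) {φ : E} {ψ : F} (hφ : ‖φ‖ = 1)
    (hψ : ‖ψ‖ = 1) {l l' t : ℝ} (hl : 0 ≤ l) (hl' : 0 ≤ l') (ht : 0 ≤ t) (u : E) :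
    ‖(exp (-l' * t) * ⟪j u, ψ⟫) • ψ - j ((exp (-l * t) * ⟪u, φ⟫) • φ)‖ ≤
      ‖u‖ * (t * ‖j‖ * |l' - l| + ‖ContinuousLinearMap.adjoint j ψ - φ‖ + ‖j φ - ψ‖) := by
  set j' := ContinuousLinearMap.adjoint j
  have hadj : ⟪j u, ψ⟫ = ⟪u, j' ψ⟫ := (ContinuousLinearMap.adjoint_inner_right j u ψ).symm
  have hexp : |exp (-l' * t) - exp (-l * t)| ≤ t * |l' - l| := by
    simpa only [neg_mul, ← sub_mul, abs_mul, abs_of_nonneg ht, mul_comm t] using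
      abs_exp_neg_sub_exp_neg_le (mul_nonneg hl' ht) (mul_nonneg hl ht)
  have hexp1 : exp (-l * t) ≤ 1 := exp_le_one_iff.2 (by nlinarith)
  calc ‖(exp (-l' * t) * ⟪j u, ψ⟫) • ψ - j ((exp (-l * t) * ⟪u, φ⟫) • φ)‖
      = ‖((exp (-l' * t) - exp (-l * t)) * ⟪j u, ψ⟫) • ψ + (exp (-l * t) * ⟪u, j' ψ - φ⟫) • ψ
          - (exp (-l * t) * ⟪u, φ⟫) • (j φ - ψ)‖ := by
        rw [map_smul, inner_sub_right, ← hadj]; congr 1; module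
    _ ≤ |exp (-l' * t) - exp (-l * t)| * |⟪j u, ψ⟫| + exp (-l * t) * |⟪u, j' ψ - φ⟫|
          + exp (-l * t) * |⟪u, φ⟫| * ‖j φ - ψ‖ := by
        refine (norm_sub_le_of_le (norm_add_le _ _) le_rfl).trans_eq ?_
        simp only [norm_smul, hψ, Real.norm_eq_abs, abs_mul, abs_exp, mul_one]
    _ ≤ t * |l' - l| * (‖j‖ * ‖u‖) + 1 * (‖u‖ * ‖j' ψ - φ‖) + 1 * (‖u‖ * 1) * ‖j φ - ψ‖ := by
        gcongr
        · exact (abs_real_inner_le_norm _ _).trans (by rw [hψ, mul_one]; exact j.le_opNorm u)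
        · exact abs_real_inner_le_norm _ _
        · exact (abs_real_inner_le_norm _ _).trans_eq (by rw [hφ])
    _ = ‖u‖ * (t * ‖j‖ * |l' - l| + ‖j' ψ - φ‖ + ‖j φ - ψ‖) := by ring

lemma norm_tailSemigroup_sub_map_le {φ : ℕ → E} {ψ : ℕ → F} (hφ : Orthonormal ℝ φ)
    (hψ : Orthonormal ℝ ψ) {lam lam' : ℕ → ℝ} (hlam_pos : ∀ i, 0 < lam i) (hlam : Monotone lam)
    (hlam'_pos : ∀ i, 0 < lam' i) (hlam' : Monotone lam') (j : E →L[ℝ] F) {C : ℝ}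
    (hj : ‖j‖ ≤ C) (m N : ℕ) {t T : ℝ} (ht : t ∈ Set.Icc 0 T) (u : E) :
    ‖tailSemigroup ψ lam' m t (j u) - j (tailSemigroup φ lam m t u)‖ ≤
      ‖u‖ * (modeDefect j φ ψ lam lam' (T * C) N + C * exp (-(lam' N) * t) +
        C * exp (-(lam N) * t)) := by
  set P' := ∑ i ∈ range N,
    if m ≤ i then (exp (-(lam' i) * t) * ⟪j u, ψ i⟫) • ψ i else 0
  set P := ∑ i ∈ range N, if m ≤ i then (exp (-(lam i) * t) * ⟪u, φ i⟫) • φ i else 0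
  obtain ⟨ht0, htT⟩ := ht
  have hT : 0 ≤ T := ht0.trans htT
  have hC : 0 ≤ C := (norm_nonneg j).trans hj
  have hju : ‖j u‖ ≤ C * ‖u‖ := j.le_of_opNorm_le hj u
  have hhead : ‖P' - j P‖ ≤ ‖u‖ * modeDefect j φ ψ lam lam' (T * C) N := by
    rw [map_sum, ← sum_sub_distrib, modeDefect, mul_sum]
    refine (norm_sum_le _ _).trans (sum_le_sum fun i _ => ?_)
    split_ifs
    · refine (norm_exp_smul_sub_map_exp_smul_le j (hφ.norm_eq_one i) (hψ.norm_eq_one i)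
        (hlam_pos i).le (hlam'_pos i).le ht0 u).trans ?_
      gcongr
    · simp only [map_zero, sub_zero, norm_zero]
      positivity
  calc ‖tailSemigroup ψ lam' m t (j u) - j (tailSemigroup φ lam m t u)‖
      = ‖(tailSemigroup ψ lam' m t (j u) - P') + (P' - j P) -
          j (tailSemigroup φ lam m t u - P)‖ := by
        rw [map_sub]; abel_nf
    _ ≤ exp (-(lam' N) * t) * ‖j u‖ + ‖u‖ * modeDefect j φ ψ lam lam' (T * C) N +
          C * (exp (-(lam N) * t) * ‖u‖) := by
        refine norm_sub_le_of_le (norm_add_le_of_le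
          (norm_tailSemigroup_sub_sum_le hψ hlam' ht0 m (j u) N) hhead) ?_
        exact j.le_of_opNorm_le_of_le hj (norm_tailSemigroup_sub_sum_le hφ hlam ht0 m u N)
    _ ≤ exp (-(lam' N) * t) * (C * ‖u‖) + ‖u‖ * modeDefect j φ ψ lam lam' (T * C) N +
          C * (exp (-(lam N) * t) * ‖u‖) := by gcongr
    _ = _ := by ring

lemma integral_norm_tailSemigroup_sub_map_le {φ : ℕ → E} {ψ : ℕ → F} (hφ : Orthonormal ℝ φ)
    (hψ : Orthonormal ℝ ψ) {lam lam' : ℕ → ℝ} (hlam_pos : ∀ i, 0 < lam i) (hlam : Monotone lam)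
    (hlam'_pos : ∀ i, 0 < lam' i) (hlam' : Monotone lam') (j : E →L[ℝ] F) {C : ℝ}
    (hj : ‖j‖ ≤ C) (m N : ℕ) {T : ℝ} (hT : 0 ≤ T) (u : E) :
    ∫ t in (0:ℝ)..T, ‖tailSemigroup ψ lam' m t (j u) - j (tailSemigroup φ lam m t u)‖ ≤
      ‖u‖ * (T * modeDefect j φ ψ lam lam' (T * C) N + C / lam' N + C / lam N) := by
  have hC : 0 ≤ C := (norm_nonneg j).trans hj
  set D := modeDefect j φ ψ lam lam' (T * C) N
  have hexp : ∀ l : ℝ, IntervalIntegrable (fun t => C * exp (-l * t)) volume 0 T := fun l =>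
    (by fun_prop : Continuous fun t => C * exp (-l * t)).intervalIntegrable _ _
  have hbound : IntervalIntegrable
      (fun t => ‖u‖ * (D + C * exp (-(lam' N) * t) + C * exp (-(lam N) * t))) volume 0 T :=
    (by fun_prop : Continuous _).intervalIntegrable _ _
  calc ∫ t in (0:ℝ)..T, ‖tailSemigroup ψ lam' m t (j u) - j (tailSemigroup φ lam m t u)‖
      ≤ ∫ t in (0:ℝ)..T, ‖u‖ * (D + C * exp (-(lam' N) * t) + C * exp (-(lam N) * t)) := by
        rw [intervalIntegral.integral_of_le hT, intervalIntegral.integral_of_le hT]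
        refine integral_mono_of_nonneg (ae_of_all _ fun _ => norm_nonneg _)
          ((intervalIntegrable_iff_integrableOn_Ioc_of_le hT).1 hbound)
          (ae_restrict_of_forall_mem measurableSet_Ioc fun t ht => ?_)
        exact norm_tailSemigroup_sub_map_le hφ hψ hlam_pos hlam hlam'_pos hlam' j hj m N
          (Set.Ioc_subset_Icc_self ht) u
    _ = ‖u‖ * (T * D + C * (∫ t in (0:ℝ)..T, exp (-(lam' N) * t)) +
          C * ∫ t in (0:ℝ)..T, exp (-(lam N) * t)) := by
        rw [intervalIntegral.integral_const_mul, intervalIntegral.integral_add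
          (intervalIntegrable_const.add (hexp _)) (hexp _), intervalIntegral.integral_add
          intervalIntegrable_const (hexp _), intervalIntegral.integral_const,
          intervalIntegral.integral_const_mul, intervalIntegral.integral_const_mul, sub_zero,
          smul_eq_mul]
    _ ≤ ‖u‖ * (T * D + C * (1 / lam' N) + C * (1 / lam N)) := by
        gcongr
        · exact integral_exp_neg_mul_le (hlam'_pos N) hT
        · exact integral_exp_neg_mul_le (hlam_pos N) hT
    _ = _ := by ring

end TailSemigroup

lemma tendsto_modeDefect {α E : Type*} [NormedAddCommGroup E] [InnerProductSpace ℝ E]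
    [CompleteSpace E] {F : α → Type*} [∀ n, NormedAddCommGroup (F n)]
    [∀ n, InnerProductSpace ℝ (F n)] [∀ n, CompleteSpace (F n)] {l : Filter α}
    (j : ∀ n, E →L[ℝ] F n) (φ : ℕ → E) (ψ : ∀ n, ℕ → F n) (lam : ℕ → ℝ) (lam' : α → ℕ → ℝ)
    (hlam : ∀ i, Tendsto (fun n => lam' n i) l (nhds (lam i)))
    (hφ : ∀ i, Tendsto (fun n => ‖j n (φ i) - ψ n i‖) l (nhds 0))
    (hψ : ∀ i, Tendsto (fun n => ‖ContinuousLinearMap.adjoint (j n) (ψ n i) - φ i‖) l (nhds 0))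
    (c : ℝ) (N : ℕ) :
    Tendsto (fun n => modeDefect (j n) φ (ψ n) lam (lam' n) c N) l (nhds 0) := by
  have hmode : ∀ i, Tendsto (fun n => c * |lam' n i - lam i| +
      ‖ContinuousLinearMap.adjoint (j n) (ψ n i) - φ i‖ + ‖j n (φ i) - ψ n i‖) l (nhds 0) := by
    intro i
    have hdist : Tendsto (fun n => |lam' n i - lam i|) l (nhds 0) := by
      simpa using ((hlam i).sub_const (lam i)).abs
    simpa using ((hdist.const_mul c).add (hψ i)).add (hφ i)
  simpa only [modeDefect, sum_const_zero] using tendsto_finsetSum (range N) fun i _ => hmode i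

/-- Lemma 3.4 of the paper: the linear semigroups on the orthogonal complements of the
first `m` modes become uniformly close along the sequence, in integrated form on `[0,T]`,
uniformly over bounded sets.  Bases are indexed by `ℕ` starting from `0`, so the modes
beyond the first `m` are those with `m ≤ i`. -/
theorem stmt3 {H0 : Type*} [NormedAddCommGroup H0] [InnerProductSpace ℝ H0]
    [CompleteSpace H0]
    (Hn : ℕ → Type*) [∀ n, NormedAddCommGroup (Hn n)] [∀ n, InnerProductSpace ℝ (Hn n)]
    [∀ n, CompleteSpace (Hn n)]
    (φ0 : HilbertBasis ℕ ℝ H0) (φn : ∀ n, HilbertBasis ℕ ℝ (Hn n))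
    (lam0 : ℕ → ℝ) (lamn : ℕ → ℕ → ℝ)
    (hlam0pos : ∀ i, 0 < lam0 i) (hlam0mono : Monotone lam0)
    (hlam0top : Tendsto lam0 atTop atTop)
    (hlamnpos : ∀ n i, 0 < lamn n i) (hlamnmono : ∀ n, Monotone (lamn n))
    (jn : ∀ n, H0 →L[ℝ] Hn n) (hjn : ∀ n, ‖jn n‖ ≤ 2)
    (hlamconv : ∀ i, Tendsto (fun n => lamn n i) atTop (nhds (lam0 i)))
    (hφconv : ∀ i, Tendsto (fun n => ‖jn n (φ0 i) - φn n i‖) atTop (nhds 0))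
    (hφadjconv : ∀ i,
      Tendsto (fun n => ‖ContinuousLinearMap.adjoint (jn n) (φn n i) - φ0 i‖)
        atTop (nhds 0))
    (m : ℕ) :
    ∀ ε : ℝ, 0 < ε → ∀ T : ℝ, 0 < T → ∀ B : Set H0, Bornology.IsBounded B →
      ∃ K : ℕ, ∀ n ≥ K, ∀ u ∈ B,
        (∫ t in (0:ℝ)..T,
          ‖(∑' i : ℕ, if m ≤ i then
              (Real.exp (-(lamn n i) * t) * ⟪jn n u, φn n i⟫) • (φn n i : Hn n) else 0)
            - jn n (∑' i : ℕ, if m ≤ i then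
              (Real.exp (-(lam0 i) * t) * ⟪u, φ0 i⟫) • (φ0 i : H0) else 0)‖) < ε := by
  intro ε hε T hT B hB
  obtain ⟨R, hR, hBR⟩ := hB.exists_pos_norm_le
  obtain ⟨N, hN⟩ := (hlam0top.eventually_gt_atTop (4 * R / ε)).exists
  set bound : ℕ → ℝ := fun n =>
    T * modeDefect (jn n) φ0 (φn n) lam0 (lamn n) (T * 2) N + 2 / lamn n N + 2 / lam0 N
  have hbound : Tendsto bound atTop (nhds (T * 0 + 2 / lam0 N + 2 / lam0 N)) :=
    (((tendsto_modeDefect jn φ0 (fun n => φn n) lam0 lamn hlamconv hφconv hφadjconv _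
      N).const_mul T).add (tendsto_const_nhds.div (hlamconv N) (hlam0pos N).ne')).add_const _
  have hlimit : R * (T * 0 + 2 / lam0 N + 2 / lam0 N) < ε := by
    rw [div_lt_iff₀ hε] at hN
    calc R * (T * 0 + 2 / lam0 N + 2 / lam0 N) = 4 * R / lam0 N := by ring
      _ < ε := by rw [div_lt_iff₀ (hlam0pos N)]; linarith
  obtain ⟨K, hK⟩ := eventually_atTop.1 ((hbound.const_mul R).eventually_lt_const hlimit)
  refine ⟨K, fun n hn u hu => ?_⟩
  have hbound_nonneg : 0 ≤ bound n := by
    have := modeDefect_nonneg (jn n) φ0 (φn n) lam0 (lamn n) (by positivity : 0 ≤ T * 2) N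
    have := hlamnpos n N
    have := hlam0pos N
    positivity
  calc _ ≤ ‖u‖ * bound n :=
        integral_norm_tailSemigroup_sub_map_le φ0.orthonormal (φn n).orthonormal hlam0pos
          hlam0mono (hlamnpos n) (hlamnmono n) (jn n) (hjn n) m N hT.le u
    _ ≤ R * bound n := by gcongr; exact hBR u hu
    _ < ε := hK n hn
end

section
/- Let N ≥ 1 and let (h_n) be a sequence of bijections ℝ^N → ℝ^N, each continuously differentiable, such that δ_n := sup_{x ∈ ℝ^N} ( ‖h_n(x) − x‖ + ‖Dh_n(x) − Id‖ ) is finite for each n and δ_n → 0 as n → ∞. Then for every u ∈ L²(ℝ^N): ∫_{ℝ^N} |u(h_n(x)) − u(x)|² dx → 0 as n → ∞. (This is the analytic core of the paper's Lemma 3.1, establishing ‖j_{h_n} u − u‖_{L²(ℝ^N)} → 0 for compositions with diffeomorphisms C¹-converging to the identity.) -/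
/-!
Once `‖Dhₙ - Id‖ ≤ 1/2`, every `Dhₙ x` has `|det| ≥ 2⁻ᴺ`, so by the change of variables
formula the push-forward of Lebesgue measure under `hₙ` is at most `2ᴺ` times Lebesgue measure
and the composition operators `g ↦ g ∘ hₙ` are uniformly bounded on `L²`. For `v` continuous
with compact support, `v ∘ hₙ → v` uniformly with supports in a fixed compact set, hence in
`L²`. Density of such `v` in `L²` and the uniform bound finish the proof by an `ε/3` argument.
-/

open MeasureTheory Filter Metric Set Module
open scoped ENNReal Topology

section Jacobian

variable {E : Type*} [NormedAddCommGroup E] [NormedSpace ℝ E] [FiniteDimensional ℝ E]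

theorem one_sub_pow_finrank_le_abs_det {A : E →L[ℝ] E} {d : ℝ} (hd : d < 1)
    (hA : ‖A - ContinuousLinearMap.id ℝ E‖ ≤ d) :
    (1 - d) ^ finrank ℝ E ≤ |LinearMap.det (A : E →ₗ[ℝ] E)| := by
  -- `A` is bounded below by `1 - d`, so `A '' ball 0 1 ⊇ ball 0 (1 - d)`; compare volumes.
  borelize E
  set μ : Measure E := Measure.addHaar
  have hlower : ∀ x, (1 - d) * ‖x‖ ≤ ‖A x‖ := fun x => by
    have := (A - ContinuousLinearMap.id ℝ E).le_of_opNorm_le hA x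
    rw [sub_apply, ContinuousLinearMap.id_apply] at this
    nlinarith [norm_sub_norm_le x (A x), norm_sub_rev x (A x)]
  have hsurj : Function.Surjective A := by
    refine LinearMap.injective_iff_surjective.1 fun x y hxy => ?_
    have := hlower (x - y)
    rw [map_sub, show A x = A y from hxy, sub_self, norm_zero] at this
    exact sub_eq_zero.1 (norm_le_zero_iff.1 (nonpos_of_mul_nonpos_right this (by linarith)))
  have hball : ball (0 : E) (1 - d) ⊆ A '' ball 0 1 := fun y hy => by
    obtain ⟨x, rfl⟩ := hsurj y
    refine ⟨x, ?_, rfl⟩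
    rw [mem_ball_zero_iff] at hy ⊢
    nlinarith [hlower x]
  have hvol := measure_mono (μ := μ) hball
  rw [Measure.addHaar_image_continuousLinearMap, ← mul_one (1 - d),
    Measure.addHaar_ball_mul_of_pos μ 0 (by linarith : 0 < 1 - d),
    ENNReal.mul_le_mul_iff_left (measure_ball_pos μ _ one_pos).ne' measure_ball_lt_top.ne] at hvol
  exact (ENNReal.ofReal_le_ofReal_iff (abs_nonneg _)).mp hvol

variable [MeasurableSpace E] [BorelSpace E] (μ : Measure E) [μ.IsAddHaarMeasure]

theorem map_le_smul_of_norm_fderiv_sub_id_le {h : E → E} (hinj : Function.Injective h)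
    (hdiff : Differentiable ℝ h) {d : ℝ} (hd : d < 1)
    (hder : ∀ x, ‖fderiv ℝ h x - ContinuousLinearMap.id ℝ E‖ ≤ d) :
    μ.map h ≤ (ENNReal.ofReal ((1 - d) ^ finrank ℝ E))⁻¹ • μ := by
  refine Measure.le_iff.2 fun s hs => ?_
  have hpre : MeasurableSet (h ⁻¹' s) := hs.preimage hdiff.continuous.measurable
  have hpos : ENNReal.ofReal ((1 - d) ^ finrank ℝ E) ≠ 0 := by
    simpa using pow_pos (sub_pos.2 hd) _
  rw [Measure.map_apply hdiff.continuous.measurable hs, Measure.smul_apply, smul_eq_mul,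
    ← ENNReal.div_eq_inv_mul, ENNReal.le_div_iff_mul_le (.inl hpos) (.inl ENNReal.ofReal_ne_top),
    mul_comm]
  calc ENNReal.ofReal ((1 - d) ^ finrank ℝ E) * μ (h ⁻¹' s)
      = ∫⁻ _ in h ⁻¹' s, ENNReal.ofReal ((1 - d) ^ finrank ℝ E) ∂μ := (setLIntegral_const _ _).symm
    _ ≤ ∫⁻ x in h ⁻¹' s, ENNReal.ofReal |(fderiv ℝ h x).det| ∂μ :=
        lintegral_mono fun x =>
          ENNReal.ofReal_le_ofReal (one_sub_pow_finrank_le_abs_det hd (hder x))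
    _ = μ (h '' (h ⁻¹' s)) := lintegral_abs_det_fderiv_eq_addHaar_image μ hpre
        (fun x _ => (hdiff x).hasFDerivAt.hasFDerivWithinAt) hinj.injOn
    _ ≤ μ s := measure_mono (image_preimage_subset h s)

end Jacobian

namespace MeasureTheory

section CompositionOperator

variable {α F : Type*} [MeasurableSpace α] {μ : Measure α} [NormedAddCommGroup F]
  {p : ℝ≥0∞} {C : ℝ≥0∞} {h : α → α}

theorem AEStronglyMeasurable.comp_of_map_le_smul {g : α → F} (hg : AEStronglyMeasurable g μ)
    (hh : AEMeasurable h μ) (hmap : μ.map h ≤ C • μ) : AEStronglyMeasurable (g ∘ h) μ :=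
  (hg.mono_ac (Measure.absolutelyContinuous_of_le_smul hmap)).comp_aemeasurable hh

theorem eLpNorm_comp_le_of_map_le_smul (hp : p ≠ ∞) {g : α → F} (hg : AEStronglyMeasurable g μ)
    (hh : AEMeasurable h μ) (hmap : μ.map h ≤ C • μ) :
    eLpNorm (g ∘ h) p μ ≤ C ^ (1 / p).toReal * eLpNorm g p μ := by
  rw [← eLpNorm_map_measure (hg.mono_ac (Measure.absolutelyContinuous_of_le_smul hmap)) hh,
    ← smul_eq_mul, ← eLpNorm_smul_measure_of_ne_top hp]
  exact eLpNorm_mono_measure g hmap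

theorem eLpNorm_comp_sub_self_le (hp₁ : 1 ≤ p) (hp : p ≠ ∞) {u v : α → F}
    (hu : AEStronglyMeasurable u μ) (hv : AEStronglyMeasurable v μ)
    (hh : AEMeasurable h μ) (hmap : μ.map h ≤ C • μ) :
    eLpNorm (u ∘ h - u) p μ ≤
      eLpNorm (v ∘ h - v) p μ + (C ^ (1 / p).toReal + 1) * eLpNorm (u - v) p μ := by
  have huv : AEStronglyMeasurable (u - v) μ := hu.sub hv
  have hsplit : u ∘ h - u = ((u - v) ∘ h + (v ∘ h - v)) - (u - v) := by
    ext x; simp only [Function.comp_apply, Pi.sub_apply, Pi.add_apply]; abel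
  have hcomp : AEStronglyMeasurable ((u - v) ∘ h) μ := huv.comp_of_map_le_smul hh hmap
  have hvh : AEStronglyMeasurable (v ∘ h - v) μ := (hv.comp_of_map_le_smul hh hmap).sub hv
  calc eLpNorm (u ∘ h - u) p μ
      ≤ eLpNorm ((u - v) ∘ h + (v ∘ h - v)) p μ + eLpNorm (u - v) p μ := by
        rw [hsplit]; exact eLpNorm_sub_le (hcomp.add hvh) huv hp₁
    _ ≤ eLpNorm ((u - v) ∘ h) p μ + eLpNorm (v ∘ h - v) p μ + eLpNorm (u - v) p μ := by
        gcongr; exact eLpNorm_add_le hcomp hvh hp₁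
    _ ≤ C ^ (1 / p).toReal * eLpNorm (u - v) p μ + eLpNorm (v ∘ h - v) p μ
          + eLpNorm (u - v) p μ := by
        gcongr; exact eLpNorm_comp_le_of_map_le_smul hp huv hh hmap
    _ = _ := by ring

end CompositionOperator

theorem tendsto_eLpNorm_top_sub_of_tendstoUniformly {β F : Type*} [MeasurableSpace β]
    {ν : Measure β} [NormedAddCommGroup F] {G : ℕ → β → F} {g : β → F}
    (hG : TendstoUniformly G g atTop) :
    Tendsto (fun n => eLpNorm (G n - g) ∞ ν) atTop (𝓝 0) := by
  refine ENNReal.tendsto_nhds_zero.2 fun ε hε => ?_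
  filter_upwards [EMetric.tendstoUniformly_iff.1 hG ε hε] with n hn
  rw [eLpNorm_exponent_top]
  refine eLpNormEssSup_le_of_ae_enorm_bound (ae_of_all _ fun x => ?_)
  rw [Pi.sub_apply, ← edist_eq_enorm_sub, edist_comm]
  exact (hn x).le

section UniformApproximation

variable {α F : Type*} [MetricSpace α] [ProperSpace α] [MeasurableSpace α]
  {μ : Measure α} [NormedAddCommGroup F] {p : ℝ≥0∞} {h : ℕ → α → α}

theorem _root_.HasCompactSupport.tendsto_eLpNorm_comp_sub_self [OpensMeasurableSpace α]
    [IsFiniteMeasureOnCompacts μ] {v : α → F} (hv : HasCompactSupport v) (hvc : Continuous v)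
    (hmeas : ∀ n, Measurable (h n)) (hunif : TendstoUniformly h id atTop) :
    Tendsto (fun n => eLpNorm (v ∘ h n - v) p μ) atTop (𝓝 0) := by
  set K := cthickening 1 (tsupport v)
  have hK : IsCompact K := IsCompact.cthickening hv
  have : IsFiniteMeasure (μ.restrict K) := isFiniteMeasure_restrict.2 hK.measure_lt_top.ne
  have hsupp : ∀ᶠ n in atTop, Function.support (v ∘ h n - v) ⊆ K := by
    filter_upwards [Metric.tendstoUniformly_iff.1 hunif 1 one_pos] with n hn x hx
    by_contra hxK
    have hvx : v x = 0 :=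
      image_eq_zero_of_notMem_tsupport fun hx' => hxK (self_subset_cthickening _ hx')
    have hvhx : v (h n x) = 0 := image_eq_zero_of_notMem_tsupport fun hx' =>
      hxK (mem_cthickening_of_dist_le x (h n x) 1 _ hx' (hn x).le)
    exact hx (by simp [hvx, hvhx])
  set M := μ.restrict K univ ^ (1 / p.toReal - 1 / (∞ : ℝ≥0∞).toReal)
  have hM : M ≠ ∞ := ENNReal.rpow_ne_top_of_nonneg (by simp) (measure_ne_top _ _)
  have hsup : Tendsto (fun n => eLpNorm (v ∘ h n - v) ∞ (μ.restrict K) * M) atTop (𝓝 0) := by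
    simpa using ENNReal.Tendsto.mul_const
      (tendsto_eLpNorm_top_sub_of_tendstoUniformly (hv.uniformContinuous_of_continuous hvc
        |>.comp_tendstoUniformly hunif)) (.inr hM)
  refine tendsto_of_tendsto_of_tendsto_of_le_of_le' tendsto_const_nhds hsup
    (Eventually.of_forall fun _ => zero_le) ?_
  filter_upwards [hsupp] with n hn
  rw [← eLpNorm_restrict_eq_of_support_subset hn]
  exact eLpNorm_le_eLpNorm_mul_rpow_measure_univ le_top
    ((hvc.comp_aestronglyMeasurable (hmeas n).aestronglyMeasurable).sub hvc.aestronglyMeasurable)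

theorem MemLp.tendsto_eLpNorm_comp_sub_self [BorelSpace α] [NormedSpace ℝ F] [μ.Regular]
    (hp₁ : 1 ≤ p) (hp : p ≠ ∞) {C : ℝ≥0∞} (hC : C ≠ ∞) (hmeas : ∀ n, Measurable (h n))
    (hmap : ∀ᶠ n in atTop, μ.map (h n) ≤ C • μ) (hunif : TendstoUniformly h id atTop)
    {u : α → F} (hu : MemLp u p μ) :
    Tendsto (fun n => eLpNorm (u ∘ h n - u) p μ) atTop (𝓝 0) := by
  have hM : C ^ (1 / p).toReal + 1 ≠ ∞ := by
    simpa using ENNReal.rpow_ne_top_of_nonneg ENNReal.toReal_nonneg hC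
  refine ENNReal.tendsto_nhds_zero.2 fun ε hε => ?_
  have hε2 : ε / 2 ≠ 0 := (ENNReal.half_pos hε.ne').ne'
  obtain ⟨η, hη, hηε⟩ := ENNReal.exists_nnreal_pos_mul_lt hM hε2
  obtain ⟨v, hv, huv, hvc, -⟩ :=
    hu.exists_hasCompactSupport_eLpNorm_sub_le hp (ENNReal.coe_ne_zero.2 hη.ne')
  filter_upwards [hmap, ENNReal.tendsto_nhds_zero.1
      (hv.tendsto_eLpNorm_comp_sub_self (μ := μ) (p := p) hvc hmeas hunif) _
      (pos_iff_ne_zero.2 hε2)] with n hmapn hvn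
  calc eLpNorm (u ∘ h n - u) p μ
      ≤ eLpNorm (v ∘ h n - v) p μ + (C ^ (1 / p).toReal + 1) * eLpNorm (u - v) p μ :=
        eLpNorm_comp_sub_self_le hp₁ hp hu.1 hvc.aestronglyMeasurable (hmeas n).aemeasurable hmapn
    _ ≤ ε / 2 + ε / 2 := by
        gcongr
        calc (C ^ (1 / p).toReal + 1) * eLpNorm (u - v) p μ
            ≤ (C ^ (1 / p).toReal + 1) * η := by gcongr
          _ ≤ ε / 2 := by rw [mul_comm]; exact hηε.le
    _ = ε := ENNReal.add_halves ε

end UniformApproximation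

theorem integral_sq_abs_eq_toReal_eLpNorm_two_sq {β : Type*} [MeasurableSpace β]
    {ν : Measure β} {f : β → ℝ} (hf : AEStronglyMeasurable f ν) :
    ∫ x, |f x| ^ 2 ∂ν = (eLpNorm f 2 ν ^ 2).toReal := by
  have hpow := eLpNorm_nnreal_pow_eq_lintegral (f := f) (μ := ν) (p := 2) two_ne_zero
  simp only [NNReal.coe_ofNat, ENNReal.coe_ofNat, ENNReal.rpow_ofNat] at hpow
  rw [integral_eq_lintegral_of_nonneg_ae (ae_of_all _ fun x => by positivity)
    (by fun_prop), hpow]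
  simp only [ENNReal.ofReal_pow (abs_nonneg _), Real.enorm_eq_ofReal_abs]

end MeasureTheory

theorem stmt9_general (N : ℕ)
    (h : ℕ → EuclideanSpace ℝ (Fin N) → EuclideanSpace ℝ (Fin N))
    (hbij : ∀ n, Function.Bijective (h n))
    (hC1 : ∀ n, ContDiff ℝ 1 (h n))
    (δ : ℕ → ℝ)
    (hδ : ∀ n x, ‖h n x - x‖ +
      ‖fderiv ℝ (h n) x - ContinuousLinearMap.id ℝ (EuclideanSpace ℝ (Fin N))‖ ≤ δ n)
    (hδ0 : Tendsto δ atTop (nhds 0))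
    (u : EuclideanSpace ℝ (Fin N) → ℝ) (hu : MemLp u 2 volume) :
    Tendsto (fun n => ∫ x, |u (h n x) - u x| ^ 2) atTop (nhds 0) := by
  have hdiff : ∀ n, Differentiable ℝ (h n) := fun n => (hC1 n).differentiable one_ne_zero
  have hmeas : ∀ n, Measurable (h n) := fun n => (hdiff n).continuous.measurable
  have hunif : TendstoUniformly h id atTop := Metric.tendstoUniformly_iff.2 fun ε hε => by
    filter_upwards [hδ0.eventually (gt_mem_nhds hε)] with n hn x
    rw [dist_comm, dist_eq_norm]
    exact ((le_add_of_nonneg_right (norm_nonneg _)).trans (hδ n x)).trans_lt hn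
  have hmap : ∀ᶠ n in atTop, volume.map (h n) ≤ (ENNReal.ofReal ((1 - 2⁻¹) ^ N))⁻¹ • volume := by
    filter_upwards [hδ0.eventually (ge_mem_nhds (by norm_num : (0 : ℝ) < 2⁻¹))] with n hn
    simpa using map_le_smul_of_norm_fderiv_sub_id_le volume (hbij n).1 (hdiff n)
      (by norm_num : (2 : ℝ)⁻¹ < 1)
      fun x => ((le_add_of_nonneg_left (norm_nonneg _)).trans (hδ n x)).trans hn
  have hLp := hu.tendsto_eLpNorm_comp_sub_self one_le_two ENNReal.ofNat_ne_top
    (ENNReal.inv_ne_top.2 (ENNReal.ofReal_pos.2 (by positivity)).ne') hmeas hmap hunif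
  have hsq := (ENNReal.tendsto_toReal (by simp)).comp (ENNReal.Tendsto.pow (n := 2) hLp)
  rw [zero_pow two_ne_zero, ENNReal.toReal_zero] at hsq
  refine hsq.congr' ?_
  filter_upwards [hmap] with n hn
  exact (integral_sq_abs_eq_toReal_eLpNorm_two_sq
    ((hu.1.comp_of_map_le_smul (hmeas n).aemeasurable hn).sub hu.1)).symm

/-- The analytic core of Lemma 3.1 of the paper: `‖u ∘ hₙ − u‖_{L²(ℝ^N)} → 0` for
compositions with diffeomorphisms `C¹`-converging to the identity. -/
theorem stmt9 (N : ℕ) (hN : 1 ≤ N)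
    (h : ℕ → EuclideanSpace ℝ (Fin N) → EuclideanSpace ℝ (Fin N))
    (hbij : ∀ n, Function.Bijective (h n))
    (hC1 : ∀ n, ContDiff ℝ 1 (h n))
    (δ : ℕ → ℝ)
    (hδ : ∀ n x, ‖h n x - x‖ +
      ‖fderiv ℝ (h n) x - ContinuousLinearMap.id ℝ (EuclideanSpace ℝ (Fin N))‖ ≤ δ n)
    (hδ0 : Tendsto δ atTop (nhds 0))
    (u : EuclideanSpace ℝ (Fin N) → ℝ) (hu : MemLp u 2 volume) :
    Tendsto (fun n => ∫ x, |u (h n x) - u x| ^ 2) atTop (nhds 0) :=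
  stmt9_general N h hbij hC1 δ hδ hδ0 u hu
end
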